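/- arXiv:math/0312358 — 5 statements merged into one kernel-verified Lean document; each statement's English description precedes it below -/
import Mathlib

section
/- Let D be a finite acyclic directed graph with edge weights in a commutative ring, and for vertices u,v let h(u,v) be the sum over all directed paths P from u to v of the product of the edge weights of P. For n-tuples of vertices u = (u_1,...,u_n) and v = (v_1,...,v_n), let F^0(u^π, v) denote the sum of weights of n-tuples of pairwise vertex-disjoint paths (P_1,...,P_n) with P_i a path from u_{π(i)} to v_i. Then ∑_{π ∈ S_n} sgn(π) · F^0(u^π, v) = det[h(u_i, v_j)]_{1≤i,j≤n}. -/
open scoped Classical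

noncomputable section

variable {V R : Type*}

def IsPathList (E : V → V → Prop) (u v : V) (p : List V) : Prop :=
  p.Chain' E ∧ p.head? = some u ∧ p.getLast? = some v

def pathWeight [CommRing R] (w : V → V → R) (p : List V) : R :=
  ((p.zip p.tail).map fun q => w q.1 q.2).prod

def pathGF [CommRing R] (E : V → V → Prop) (w : V → V → R) (u v : V) : R :=
  ∑ᶠ p ∈ {p : List V | IsPathList E u v p}, pathWeight w p

def NonIntersecting {n : ℕ} (P : Fin n → List V) : Prop :=
  ∀ i j, i ≠ j → (P i).Disjoint (P j)

def F0 [CommRing R] {n : ℕ} (E : V → V → Prop) (w : V → V → R)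
    (u v : Fin n → V) : R :=
  ∑ᶠ P ∈ {P : Fin n → List V |
      (∀ i, IsPathList E (u i) (v i) (P i)) ∧ NonIntersecting P},
    ∏ i, pathWeight w (P i)

def Acyclic (E : V → V → Prop) : Prop :=
  ∀ (v : V) (p : List V), IsPathList E v v p → p.length ≤ 1

namespace LGV

/-! ### List helper lemmas -/

theorem exists_first_split (q : V → Prop) (l : List V) (h : ∃ a ∈ l, q a) :
    ∃ l₁ x l₂, l = l₁ ++ x :: l₂ ∧ q x ∧ ∀ a ∈ l₁, ¬ q a := by
  induction l with
  | nil => simp at h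
  | cons b t ih =>
    by_cases hb : q b
    · exact ⟨[], b, t, rfl, hb, by simp⟩
    · obtain ⟨a, ha, hq⟩ := h
      rcases List.mem_cons.1 ha with rfl | ha
      · exact absurd hq hb
      · obtain ⟨l₁, x, l₂, rfl, hx, hl₁⟩ := ih ⟨a, ha, hq⟩
        exact ⟨b :: l₁, x, l₂, rfl, hx, by
          intro c hc; rcases List.mem_cons.1 hc with rfl | hc
          exacts [hb, hl₁ c hc]⟩

theorem first_split_unique {q : V → Prop} {l₁ l₂ m₁ m₂ : List V} {x y : V}
    (he : l₁ ++ x :: l₂ = m₁ ++ y :: m₂) (hx : q x) (hy : q y)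
    (h₁ : ∀ a ∈ l₁, ¬ q a) (h₂ : ∀ a ∈ m₁, ¬ q a) :
    l₁ = m₁ ∧ x = y ∧ l₂ = m₂ := by
  induction l₁ generalizing m₁ with
  | nil =>
    cases m₁ with
    | nil => simp_all
    | cons b m₁' =>
      simp only [List.nil_append, List.cons_append, List.cons.injEq] at he
      exact absurd hx (he.1 ▸ h₂ b (by simp))
  | cons c l₁' ih =>
    cases m₁ with
    | nil =>
      simp only [List.cons_append, List.nil_append, List.cons.injEq] at he
      exact absurd hy (he.1 ▸ h₁ c (by simp))
    | cons b m₁' =>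
      simp only [List.cons_append, List.cons.injEq] at he
      obtain ⟨rfl, he⟩ := he
      obtain ⟨h1, h2, h3⟩ := ih he (fun a ha => h₁ a (by simp [ha]))
        (fun a ha => h₂ a (by simp [ha]))
      exact ⟨by rw [h1], h2, h3⟩

theorem path_nodup {E : V → V → Prop} (hacyc : Acyclic E) {u v : V} {p : List V}
    (hp : IsPathList E u v p) : p.Nodup := by
  by_contra h
  rw [List.nodup_iff_sublist] at h
  push_neg at h
  obtain ⟨a, ha⟩ := h
  obtain ⟨r₁, r₂, rfl, har₁, har₂⟩ := List.cons_sublist_iff.1 ha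
  rw [List.singleton_sublist] at har₂
  obtain ⟨s, t, rfl⟩ := List.append_of_mem har₁
  obtain ⟨s', t', rfl⟩ := List.append_of_mem har₂
  set m : List V := (a :: (t ++ s')) ++ [a] with hm
  have hinfix : m <:+: (s ++ a :: t) ++ (s' ++ a :: t') := ⟨s, t', by simp [hm]⟩
  have hpath : IsPathList E a a m :=
    ⟨hp.1.infix hinfix, by simp [hm], List.getLast?_concat⟩
  have := hacyc a m hpath
  simp [hm] at this

theorem pathWeight_cons_cons [CommRing R] (w : V → V → R) (a b : V) (l : List V) :
    pathWeight w (a :: b :: l) = w a b * pathWeight w (b :: l) := by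
  simp [pathWeight]

theorem pathWeight_singleton [CommRing R] (w : V → V → R) (a : V) :
    pathWeight w [a] = 1 := by simp [pathWeight]

theorem pathWeight_split [CommRing R] (w : V → V → R) (l : List V) (a : V) (t : List V) :
    pathWeight w (l ++ a :: t) = pathWeight w (l ++ [a]) * pathWeight w (a :: t) := by
  induction l with
  | nil => simp [pathWeight_singleton]
  | cons b l' ih =>
    cases l' with
    | nil => simp [pathWeight_cons_cons, pathWeight_singleton]
    | cons c l'' =>
      simp only [List.cons_append, pathWeight_cons_cons] at *
      rw [ih]; ring

theorem head?_append_cons (l : List V) (a : V) (t : List V) :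
    (l ++ a :: t).head? = l.head?.or (some a) := by
  rw [List.head?_append]; rfl

theorem getLast?_append_cons (l : List V) (a : V) (t : List V) :
    (l ++ a :: t).getLast? = (a :: t).getLast? := by
  rw [List.getLast?_append]
  cases h : (a :: t).getLast? with
  | none => simp [List.getLast?_eq_none_iff] at h
  | some b => rfl

/-! ### Finiteness and finset versions of the sums -/

variable [Fintype V] [CommRing R] {E : V → V → Prop}

theorem finite_paths (hacyc : Acyclic E) (u v : V) :
    {p : List V | IsPathList E u v p}.Finite := by
  apply (List.finite_length_le V (Fintype.card V)).subset
  intro p hp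
  exact (path_nodup hacyc hp).length_le_card

def pathFinset (hacyc : Acyclic E) (u v : V) : Finset (List V) :=
  (finite_paths hacyc u v).toFinset

theorem mem_pathFinset {hacyc : Acyclic E} {u v : V} {p : List V} :
    p ∈ pathFinset hacyc u v ↔ IsPathList E u v p := by
  simp [pathFinset, Set.Finite.mem_toFinset]

theorem pathGF_eq (hacyc : Acyclic E) (w : V → V → R) (u v : V) :
    pathGF E w u v = ∑ p ∈ pathFinset hacyc u v, pathWeight w p := by
  rw [pathGF, ← finsum_mem_coe_finset]
  congr 1
  simp [pathFinset, Set.Finite.coe_toFinset]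

variable {n : ℕ}

def allT (hacyc : Acyclic E) (u v : Fin n → V) : Finset (Fin n → List V) :=
  Fintype.piFinset fun k => pathFinset hacyc (u k) (v k)

theorem mem_allT {hacyc : Acyclic E} {u v : Fin n → V} {P : Fin n → List V} :
    P ∈ allT hacyc u v ↔ ∀ k, IsPathList E (u k) (v k) (P k) := by
  simp [allT, Fintype.mem_piFinset, mem_pathFinset]

theorem F0_eq (hacyc : Acyclic E) (w : V → V → R) (u v : Fin n → V) :
    F0 E w u v = ∑ P ∈ (allT hacyc u v).filter NonIntersecting,
      ∏ i, pathWeight w (P i) := by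
  rw [F0, ← finsum_mem_coe_finset]
  congr 1
  ext P
  simp [Finset.mem_filter, mem_allT]

theorem NonIntersecting_comp {P : Fin n → List V} (e : Equiv.Perm (Fin n)) :
    NonIntersecting (P ∘ e) ↔ NonIntersecting P := by
  constructor
  · intro h i j hij
    have := h (e.symm i) (e.symm j) (fun hc => hij (by simpa using congrArg e hc))
    simpa using this
  · intro h i j hij
    exact h (e i) (e j) (fun hc => hij (e.injective hc))

/-! ### The sign-reversing involution -/


/-! ### Switching machinery -/

structure SData (P : Fin n → List V) where
  i : Fin n
  j : Fin n
  x : V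
  A : List V
  B : List V
  C : List V
  D : List V
  hij : i < j
  hPi : P i = A ++ x :: B
  hPj : P j = C ++ x :: D
  hmin : ∀ k, k < i → ∀ l, l ≠ k → (P k).Disjoint (P l)
  hA : ∀ a ∈ A, ∀ l, l ≠ i → a ∉ P l
  hjmin : ∀ l, l ≠ i → l < j → x ∉ P l
  hC : ∀ a ∈ C, a ≠ x

theorem sdata_exists {P : Fin n → List V} (hni : ¬ NonIntersecting P) :
    Nonempty (SData P) := by
  rw [NonIntersecting] at hni
  push_neg at hni
  obtain ⟨i₀, j₀, hne₀, hdis₀⟩ := hni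
  set Bset : Finset (Fin n) :=
    Finset.univ.filter (fun k => ∃ l, l ≠ k ∧ ¬ (P k).Disjoint (P l)) with hBset
  have hBne : Bset.Nonempty := ⟨i₀, by simp [hBset]; exact ⟨j₀, fun h => hne₀ h.symm, hdis₀⟩⟩
  set i := Bset.min' hBne with hidef
  have hiB : i ∈ Bset := Bset.min'_mem hBne
  have hmin : ∀ k, k < i → ∀ l, l ≠ k → (P k).Disjoint (P l) := by
    intro k hk l hl
    by_contra hd
    exact absurd (Bset.min'_le k (by simp [hBset]; exact ⟨l, hl, hd⟩)) (not_le.2 hk)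
  simp only [hBset, Finset.mem_filter, Finset.mem_univ, true_and] at hiB
  obtain ⟨l₀, hl₀i, hl₀d⟩ := hiB
  have hex : ∃ a ∈ P i, ∃ l, l ≠ i ∧ a ∈ P l := by
    simp only [List.Disjoint] at hl₀d
    push_neg at hl₀d
    obtain ⟨a, ha1, ha2⟩ := hl₀d
    exact ⟨a, ha1, l₀, hl₀i, ha2.1⟩
  obtain ⟨A, x, B, hPi, hx, hA⟩ := exists_first_split _ _ hex
  obtain ⟨l₁, hl₁i, hxl₁⟩ := hx
  set Jset : Finset (Fin n) := Finset.univ.filter (fun l => l ≠ i ∧ x ∈ P l) with hJset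
  have hJne : Jset.Nonempty := ⟨l₁, by simp [hJset]; exact ⟨hl₁i, hxl₁⟩⟩
  set j := Jset.min' hJne with hjdef
  have hjJ : j ∈ Jset := Jset.min'_mem hJne
  simp only [hJset, Finset.mem_filter, Finset.mem_univ, true_and] at hjJ
  obtain ⟨hji, hxj⟩ := hjJ
  have hjmin : ∀ l, l ≠ i → l < j → x ∉ P l := by
    intro l hli hlj hxl
    exact absurd (Jset.min'_le l (by simp [hJset]; exact ⟨hli, hxl⟩)) (not_le.2 hlj)
  have hxi : x ∈ P i := by rw [hPi]; simp
  have hij : i < j := by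
    refine lt_of_le_of_ne ?_ (fun h => hji h.symm)
    refine Bset.min'_le j ?_
    simp only [hBset, Finset.mem_filter, Finset.mem_univ, true_and]
    exact ⟨i, Ne.symm hji, fun hd => hd hxj hxi⟩
  obtain ⟨C, x', D, hPj, hx', hC⟩ := exists_first_split (· = x) (P j) ⟨x, hxj, rfl⟩
  subst hx'
  exact ⟨⟨i, j, x', A, B, C, D, hij, hPi, hPj, hmin,
    fun a ha l hl hm => hA a ha ⟨l, hl, hm⟩, hjmin, hC⟩⟩

theorem SData.x_mem_i {P : Fin n → List V} (d : SData P) : d.x ∈ P d.i := by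
  rw [d.hPi]; simp

theorem SData.x_mem_j {P : Fin n → List V} (d : SData P) : d.x ∈ P d.j := by
  rw [d.hPj]; simp

theorem sdata_unique {P : Fin n → List V} (d e : SData P) :
    d.i = e.i ∧ d.j = e.j ∧ d.x = e.x ∧ d.A = e.A ∧ d.B = e.B ∧ d.C = e.C ∧ d.D = e.D := by
  have hbad : ∀ f : SData P, ¬ (P f.i).Disjoint (P f.j) := fun f hd => hd f.x_mem_i f.x_mem_j
  have hi : d.i = e.i := by
    rcases lt_trichotomy d.i e.i with h | h | h
    · exact absurd (e.hmin d.i h d.j (fun hc => (hc ▸ d.hij).false)) (hbad d)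
    · exact h
    · exact absurd (d.hmin e.i h e.j (fun hc => (hc ▸ e.hij).false)) (hbad e)
  have hsplit1 := first_split_unique (q := fun a => ∃ l, l ≠ d.i ∧ a ∈ P l)
    (d.hPi.symm.trans (by rw [hi, e.hPi]))
    ⟨d.j, d.hij.ne', d.x_mem_j⟩ ⟨e.j, by rw [hi]; exact e.hij.ne', e.x_mem_j⟩
    (fun a ha hq => hq.elim fun l hl => d.hA a ha l hl.1 hl.2)
    (fun a ha hq => hq.elim fun l hl => e.hA a ha l (hi ▸ hl.1) hl.2)
  obtain ⟨hA, hx, hB⟩ := hsplit1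
  have hj : d.j = e.j := by
    rcases lt_trichotomy d.j e.j with h | h | h
    · exact absurd (e.hjmin d.j (by rw [← hi]; exact d.hij.ne') h) (by rw [← hx]; exact fun hc => hc d.x_mem_j)
    · exact h
    · exact absurd (d.hjmin e.j (by rw [hi]; exact e.hij.ne') h) (by rw [hx]; exact fun hc => hc e.x_mem_j)
  have hsplit2 := first_split_unique (q := fun a => a = d.x)
    (d.hPj.symm.trans (by rw [hj, e.hPj, ← hx]))
    rfl rfl d.hC (by rw [hx]; exact e.hC)
  exact ⟨hi, hj, hx, hA, hB, hsplit2.1, hsplit2.2.2⟩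

def switchP (P : Fin n → List V) (d : SData P) : Fin n → List V :=
  Function.update (Function.update P d.i (d.A ++ d.x :: d.D)) d.j (d.C ++ d.x :: d.B)

theorem switchP_apply_i (P : Fin n → List V) (d : SData P) :
    switchP P d d.i = d.A ++ d.x :: d.D := by
  rw [switchP, Function.update_of_ne d.hij.ne, Function.update_self]

theorem switchP_apply_j (P : Fin n → List V) (d : SData P) :
    switchP P d d.j = d.C ++ d.x :: d.B := by
  rw [switchP, Function.update_self]

theorem switchP_apply_ne (P : Fin n → List V) (d : SData P) {k : Fin n}
    (hk : k ≠ d.i) (hk' : k ≠ d.j) : switchP P d k = P k := by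
  rw [switchP, Function.update_of_ne hk', Function.update_of_ne hk]

/-- every vertex of a switched path lies on one of the two original paths -/
theorem switchP_subset (P : Fin n → List V) (d : SData P) (k : Fin n) {a : V}
    (ha : a ∈ switchP P d k) : a ∈ P k ∨ a ∈ P d.i ∨ a ∈ P d.j := by
  by_cases h1 : k = d.i
  · subst h1
    rw [switchP_apply_i] at ha
    rcases List.mem_append.1 ha with h | h
    · exact Or.inr (Or.inl (by rw [d.hPi]; simp [h]))
    · rcases List.mem_cons.1 h with rfl | h
      · exact Or.inr (Or.inl (by rw [d.hPi]; simp))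
      · exact Or.inr (Or.inr (by rw [d.hPj]; simp [h]))
  by_cases h2 : k = d.j
  · subst h2
    rw [switchP_apply_j] at ha
    rcases List.mem_append.1 ha with h | h
    · exact Or.inr (Or.inr (by rw [d.hPj]; simp [h]))
    · rcases List.mem_cons.1 h with rfl | h
      · exact Or.inr (Or.inr (by rw [d.hPj]; simp))
      · exact Or.inr (Or.inl (by rw [d.hPi]; simp [h]))
  · rw [switchP_apply_ne P d h1 h2] at ha
    exact Or.inl ha

def SData.mirror {P : Fin n → List V} (d : SData P) (hnd : (P d.i).Nodup) :
    SData (switchP P d) where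
  i := d.i
  j := d.j
  x := d.x
  A := d.A
  B := d.D
  C := d.C
  D := d.B
  hij := d.hij
  hPi := switchP_apply_i P d
  hPj := switchP_apply_j P d
  hmin := by
    intro k hk l hl a ha hmem
    have hki : k ≠ d.i := hk.ne
    have hkj : k ≠ d.j := (hk.trans d.hij).ne
    rw [switchP_apply_ne P d hki hkj] at ha
    rcases switchP_subset P d l hmem with h | h | h
    · exact d.hmin k hk l hl ha h
    · exact d.hmin k hk d.i (Ne.symm hki) ha h
    · exact d.hmin k hk d.j (Ne.symm hkj) ha h
  hA := by
    intro a ha l hl hmem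
    have hAB : d.A.Disjoint (d.x :: d.B) := by
      have := hnd
      rw [d.hPi, List.nodup_append] at this
      exact fun a ha hb => this.2.2 a ha a hb rfl
    by_cases h2 : l = d.j
    · subst h2
      rw [switchP_apply_j] at hmem
      rcases List.mem_append.1 hmem with h | h
      · exact d.hA a ha d.j d.hij.ne' (by rw [d.hPj]; simp [h])
      · exact hAB ha h
    · rw [switchP_apply_ne P d hl h2] at hmem
      exact d.hA a ha l hl hmem
  hjmin := by
    intro l hl hlj hmem
    rw [switchP_apply_ne P d hl hlj.ne] at hmem
    exact d.hjmin l hl hlj hmem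
  hC := d.hC


theorem switchP_switchP {P : Fin n → List V} (d : SData P) (hnd : (P d.i).Nodup) :
    switchP (switchP P d) (d.mirror hnd) = P := by
  funext k
  by_cases h1 : k = d.i
  · subst h1
    rw [show d.i = (d.mirror hnd).i from rfl, switchP_apply_i]
    exact (d.hPi).symm
  by_cases h2 : k = d.j
  · subst h2
    rw [show d.j = (d.mirror hnd).j from rfl, switchP_apply_j]
    exact (d.hPj).symm
  · rw [switchP_apply_ne (switchP P d) (d.mirror hnd) h1 h2, switchP_apply_ne P d h1 h2]

theorem chain'_glue {E : V → V → Prop} {A B C D : List V} {x : V}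
    (h₁ : List.Chain' E (A ++ x :: B)) (h₂ : List.Chain' E (C ++ x :: D)) :
    List.Chain' E (A ++ x :: D) := by
  rw [show A ++ x :: B = (A ++ [x]) ++ B by simp] at h₁
  rw [show C ++ x :: D = (C ++ [x]) ++ D by simp] at h₂
  rw [show A ++ x :: D = (A ++ [x]) ++ D by simp]
  simp only [List.Chain', List.isChain_append] at h₁ h₂ ⊢
  refine ⟨h₁.1, h₂.2.1, ?_⟩
  intro y hy z hz
  have hyx : y = x := by
    rw [List.getLast?_concat] at hy
    exact (Option.some_inj.1 hy).symm
  subst hyx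
  exact h₂.2.2 y (by rw [List.getLast?_concat]; rfl) z hz

theorem isPathList_glue {E : V → V → Prop} {u₁ v₁ u₂ v₂ : V} {A B C D : List V} {x : V}
    (h₁ : IsPathList E u₁ v₁ (A ++ x :: B)) (h₂ : IsPathList E u₂ v₂ (C ++ x :: D)) :
    IsPathList E u₁ v₂ (A ++ x :: D) := by
  refine ⟨chain'_glue h₁.1 h₂.1, ?_, ?_⟩
  · have := h₁.2.1
    rw [head?_append_cons] at this ⊢
    exact this
  · have := h₂.2.2
    rw [getLast?_append_cons] at this ⊢
    exact this

theorem prod_switchP [CommRing R] (w : V → V → R) (P : Fin n → List V) (d : SData P) :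
    ∏ k, pathWeight w (switchP P d k) = ∏ k, pathWeight w (P k) := by
  have hsd : (Finset.univ \ {d.i}) \ {d.j} = Finset.univ \ ({d.i, d.j} : Finset (Fin n)) := by
    ext k; simp
  have key : ∀ (f : Fin n → R), ∏ k, f k
      = f d.i * (f d.j * ∏ k ∈ Finset.univ \ ({d.i, d.j} : Finset (Fin n)), f k) := by
    intro f
    rw [Finset.prod_eq_mul_prod_sdiff_singleton_of_mem (Finset.mem_univ d.i) f,
      Finset.prod_eq_mul_prod_sdiff_singleton_of_mem
        (i := d.j) (Finset.mem_sdiff.2 ⟨Finset.mem_univ d.j, by simp [d.hij.ne']⟩) f, hsd]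
  rw [key, key, switchP_apply_i, switchP_apply_j]
  have hrest : ∏ k ∈ Finset.univ \ ({d.i, d.j} : Finset (Fin n)), pathWeight w (switchP P d k)
      = ∏ k ∈ Finset.univ \ ({d.i, d.j} : Finset (Fin n)), pathWeight w (P k) := by
    refine Finset.prod_congr rfl fun k hk => ?_
    rw [Finset.mem_sdiff, Finset.mem_insert, Finset.mem_singleton] at hk
    push_neg at hk
    rw [switchP_apply_ne P d hk.2.1 hk.2.2]
  rw [hrest, d.hPi, d.hPj, pathWeight_split w d.A d.x d.D, pathWeight_split w d.C d.x d.B,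
    pathWeight_split w d.A d.x d.B, pathWeight_split w d.C d.x d.D]
  try ring

def switchFun : (Σ _ : Equiv.Perm (Fin n), (Fin n → List V)) →
    (Σ _ : Equiv.Perm (Fin n), (Fin n → List V)) := fun a =>
  if h : Nonempty (SData a.2) then
    ⟨a.1 * Equiv.swap (Classical.choice h).i (Classical.choice h).j,
      switchP a.2 (Classical.choice h)⟩
  else a

theorem switchFun_eq {a : Σ _ : Equiv.Perm (Fin n), (Fin n → List V)} (d : SData a.2) :
    switchFun a = ⟨a.1 * Equiv.swap d.i d.j, switchP a.2 d⟩ := by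
  rw [switchFun, dif_pos ⟨d⟩]
  set e := Classical.choice (⟨d⟩ : Nonempty (SData a.2)) with he
  obtain ⟨hi, hj, hx, hA, hB, hC, hD⟩ := sdata_unique e d
  congr 1
  · rw [hi, hj]
  · rw [switchP, switchP, hi, hj, hx, hA, hB, hC, hD]

theorem sum_bad_eq_zero (hacyc : Acyclic E) (w : V → V → R) (u v : Fin n → V) :
    ∑ σ : Equiv.Perm (Fin n), (Equiv.Perm.sign σ : ℤ) •
      ∑ P ∈ (allT hacyc u (fun k => v (σ k))).filter (fun P => ¬ NonIntersecting P),
        ∏ i, pathWeight w (P i) = 0 := by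
  simp_rw [Finset.smul_sum]
  rw [Finset.sum_sigma' Finset.univ
    (fun σ => (allT hacyc u (fun k => v (σ k))).filter (fun P => ¬ NonIntersecting P))
    (fun σ P => (Equiv.Perm.sign σ : ℤ) • ∏ i, pathWeight w (P i))]
  refine Finset.sum_involution (fun a _ => switchFun a) ?_ ?_ ?_ ?_
  case refine_3 =>
    intro a ha
    rw [Finset.mem_sigma, Finset.mem_filter, mem_allT] at ha
    obtain ⟨-, hP, hni⟩ := ha
    have d : SData a.2 := Classical.choice (sdata_exists hni)
    rw [switchFun_eq d, Finset.mem_sigma, Finset.mem_filter, mem_allT]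
    have hPi' := hP d.i
    have hPj' := hP d.j
    rw [d.hPi] at hPi'
    rw [d.hPj] at hPj'
    refine ⟨Finset.mem_univ _, fun k => ?_, fun hni' => ?_⟩
    · dsimp only
      by_cases h1 : k = d.i
      · subst h1
        rw [switchP_apply_i, Equiv.Perm.mul_apply, Equiv.swap_apply_left]
        exact isPathList_glue hPi' hPj'
      by_cases h2 : k = d.j
      · subst h2
        rw [switchP_apply_j, Equiv.Perm.mul_apply, Equiv.swap_apply_right]
        exact isPathList_glue hPj' hPi'
      · rw [switchP_apply_ne _ _ h1 h2, Equiv.Perm.mul_apply,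
          Equiv.swap_apply_of_ne_of_ne h1 h2]
        exact hP k
    · dsimp only at hni'
      have m1 : d.x ∈ switchP a.snd d d.i := by rw [switchP_apply_i]; simp
      have m2 : d.x ∈ switchP a.snd d d.j := by rw [switchP_apply_j]; simp
      exact hni' d.i d.j d.hij.ne m1 m2
  case refine_1 =>
    intro a ha
    rw [Finset.mem_sigma, Finset.mem_filter, mem_allT] at ha
    obtain ⟨-, hP, hni⟩ := ha
    have d : SData a.2 := Classical.choice (sdata_exists hni)
    rw [switchFun_eq d]
    have hs : ((Equiv.Perm.sign (a.1 * Equiv.swap d.i d.j) : ℤ)) = -(Equiv.Perm.sign a.1 : ℤ) := by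
      rw [Equiv.Perm.sign_mul, Equiv.Perm.sign_swap d.hij.ne]
      simp
    show (Equiv.Perm.sign a.1 : ℤ) • ∏ i, pathWeight w (a.2 i)
      + (Equiv.Perm.sign (a.1 * Equiv.swap d.i d.j) : ℤ) • ∏ i, pathWeight w (switchP a.2 d i) = 0
    rw [hs, prod_switchP, neg_smul, add_neg_cancel]
  case refine_2 =>
    intro a ha _
    rw [Finset.mem_sigma, Finset.mem_filter, mem_allT] at ha
    obtain ⟨-, hP, hni⟩ := ha
    have d : SData a.2 := Classical.choice (sdata_exists hni)
    rw [switchFun_eq d]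
    intro hcontra
    have h1 : a.1 * Equiv.swap d.i d.j = a.1 := congrArg Sigma.fst hcontra
    have h2 : Equiv.swap d.i d.j = 1 :=
      mul_left_cancel (h1.trans (mul_one a.1).symm)
    have : d.j = d.i := by
      have := congrArg (fun e => e d.i) h2
      simpa [Equiv.swap_apply_left] using this
    exact d.hij.ne' this
  case refine_4 =>
    intro a ha
    rw [Finset.mem_sigma, Finset.mem_filter, mem_allT] at ha
    obtain ⟨-, hP, hni⟩ := ha
    have d : SData a.2 := Classical.choice (sdata_exists hni)
    have hnd : (a.2 d.i).Nodup := path_nodup hacyc (hP d.i)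
    rw [switchFun_eq d]
    rw [switchFun_eq (a := ⟨a.1 * Equiv.swap d.i d.j, switchP a.2 d⟩) (d.mirror hnd)]
    have h2 : switchP (switchP a.2 d) (d.mirror hnd) = a.2 := switchP_switchP d hnd
    have h1 : a.1 * Equiv.swap d.i d.j * Equiv.swap (d.mirror hnd).i (d.mirror hnd).j = a.1 := by
      rw [show (d.mirror hnd).i = d.i from rfl, show (d.mirror hnd).j = d.j from rfl,
        mul_assoc, Equiv.swap_mul_self, mul_one]
    calc (⟨a.1 * Equiv.swap d.i d.j * Equiv.swap (d.mirror hnd).i (d.mirror hnd).j,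
            switchP (switchP a.2 d) (d.mirror hnd)⟩ :
          Σ _ : Equiv.Perm (Fin n), (Fin n → List V))
        = ⟨a.1, a.2⟩ := by rw [h1, h2]
      _ = a := rfl

end LGV

open LGV in
/-- Lindström–Gessel–Viennot lemma:
`∑_{π ∈ S_n} sgn(π) · F⁰(uᵖⁱ, v) = det[h(u_i, v_j)]`. -/
theorem lindstrom_gessel_viennot [Fintype V] [CommRing R] {n : ℕ}
    (E : V → V → Prop) (hacyc : Acyclic E) (w : V → V → R)
    (u v : Fin n → V) :
    ∑ π : Equiv.Perm (Fin n),
        (Equiv.Perm.sign π : ℤ) • F0 E w (fun i => u (π i)) v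
      = (Matrix.of fun i j : Fin n => pathGF E w (u i) (v j)).det := by
  -- Step B: expand the determinant
  have hdet : (Matrix.of fun i j : Fin n => pathGF E w (u i) (v j)).det
      = ∑ σ : Equiv.Perm (Fin n), (Equiv.Perm.sign σ : ℤ) •
          ∑ P ∈ allT hacyc u (fun k => v (σ k)), ∏ i, pathWeight w (P i) := by
    rw [← Matrix.det_transpose, Matrix.det_apply]
    refine Finset.sum_congr rfl fun σ _ => ?_
    congr 1
    simp only [Matrix.transpose_apply, Matrix.of_apply]
    rw [show (∏ i, pathGF E w (u i) (v (σ i)))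
        = ∏ i, ∑ p ∈ pathFinset hacyc (u i) (v (σ i)), pathWeight w p from
      Finset.prod_congr rfl fun i _ => pathGF_eq hacyc w _ _]
    rw [Finset.prod_univ_sum]
    rfl
  -- Step A: reindex the LHS
  have hLHS : ∀ π : Equiv.Perm (Fin n), F0 E w (fun i => u (π i)) v
      = ∑ P ∈ (allT hacyc u (fun k => v (π⁻¹ k))).filter NonIntersecting,
          ∏ i, pathWeight w (P i) := by
    intro π
    rw [F0_eq hacyc w]
    refine Finset.sum_nbij' (fun P => P ∘ ⇑π⁻¹) (fun Q => Q ∘ ⇑π) ?_ ?_ ?_ ?_ ?_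
    · intro P hP
      rw [Finset.mem_filter] at hP ⊢
      obtain ⟨h1, h2⟩ := hP
      rw [mem_allT] at h1 ⊢
      refine ⟨fun k => ?_, (NonIntersecting_comp π⁻¹).2 h2⟩
      simpa using h1 (π⁻¹ k)
    · intro Q hQ
      rw [Finset.mem_filter] at hQ ⊢
      obtain ⟨h1, h2⟩ := hQ
      rw [mem_allT] at h1 ⊢
      refine ⟨fun k => ?_, (NonIntersecting_comp π).2 h2⟩
      simpa using h1 (π k)
    · intro P _; ext k; simp
    · intro Q _; ext k; simp
    · intro P _
      exact (Equiv.prod_comp π⁻¹ (fun i => pathWeight w (P i))).symm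
  calc ∑ π : Equiv.Perm (Fin n),
        (Equiv.Perm.sign π : ℤ) • F0 E w (fun i => u (π i)) v
      = ∑ σ : Equiv.Perm (Fin n), (Equiv.Perm.sign σ : ℤ) •
          ∑ P ∈ (allT hacyc u (fun k => v (σ k))).filter NonIntersecting,
            ∏ i, pathWeight w (P i) := by
        refine Fintype.sum_equiv (Equiv.inv (Equiv.Perm (Fin n))) _ _ fun π => ?_
        rw [hLHS π]
        simp [Equiv.Perm.sign_inv]
    _ = (∑ σ : Equiv.Perm (Fin n), (Equiv.Perm.sign σ : ℤ) •
          ∑ P ∈ (allT hacyc u (fun k => v (σ k))).filter NonIntersecting,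
            ∏ i, pathWeight w (P i))
        + ∑ σ : Equiv.Perm (Fin n), (Equiv.Perm.sign σ : ℤ) •
          ∑ P ∈ (allT hacyc u (fun k => v (σ k))).filter (fun P => ¬ NonIntersecting P),
            ∏ i, pathWeight w (P i) := by
        rw [sum_bad_eq_zero hacyc w u v, add_zero]
    _ = _ := by
        rw [hdet, ← Finset.sum_add_distrib]
        refine Finset.sum_congr rfl fun σ _ => ?_
        rw [← smul_add, Finset.sum_filter_add_sum_filter_not]
end
end

section
/- Let D be a finite acyclic weighted digraph, u = (u_1,...,u_n) and v = (v_1,...,v_n) two n-tuples of vertices such that u is D-compatible with v, meaning every path from u_i to v_l intersects every path from u_j to v_k whenever i < j and k < l. Then the sum of the weights of all non-intersecting n-tuples of paths with P_i going from u_i to v_i equals det[h(u_i, v_j)]_{1≤i,j≤n}, where h(u,v) is the weighted path-counting function. -/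
open scoped Classical

noncomputable section

variable {V R : Type*}

/-- `u` is `D`-compatible with `v`: every path from `u i` to `v l` intersects
every path from `u j` to `v k` whenever `i < j` and `k < l`. -/
def DCompatible {m n : ℕ} (E : V → V → Prop) (u : Fin m → V) (v : Fin n → V) : Prop :=
  ∀ (i j : Fin m) (k l : Fin n), i < j → k < l →
    ∀ p q : List V, IsPathList E (u i) (v l) p → IsPathList E (u j) (v k) q →
      ¬ p.Disjoint q

namespace GVaux

open List

variable {α : Type*}

lemma takeWhile_append_all {p : α → Bool} {A B : List α} (h : ∀ a ∈ A, p a) :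
    (A ++ B).takeWhile p = A ++ B.takeWhile p := by
  induction A with
  | nil => simp
  | cons a t ih =>
    simp only [cons_append, takeWhile_cons_of_pos (h a mem_cons_self)]
    rw [ih (fun x hx => h x (mem_cons_of_mem _ hx))]

lemma dropWhile_append_all {p : α → Bool} {A B : List α} (h : ∀ a ∈ A, p a) :
    (A ++ B).dropWhile p = B.dropWhile p := by
  induction A with
  | nil => simp
  | cons a t ih =>
    simp only [cons_append, dropWhile_cons_of_pos (h a mem_cons_self)]
    exact ih (fun x hx => h x (mem_cons_of_mem _ hx))

/-- prefix of `p` before the first occurrence of `x`. -/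
def pre (x : α) (p : List α) : List α := p.takeWhile (fun y => y ≠ x)

/-- suffix of `p` strictly after the first occurrence of `x`. -/
def post (x : α) (p : List α) : List α := (p.dropWhile (fun y => y ≠ x)).tail

lemma pre_ne {x : α} {p : List α} : ∀ y ∈ pre x p, y ≠ x := by
  intro y hy
  have := mem_takeWhile_imp hy
  simpa using this

lemma split_eq {x : α} {p : List α} (hx : x ∈ p) : p = pre x p ++ x :: post x p := by
  have hne : p.dropWhile (fun y => y ≠ x) ≠ [] := by
    intro h
    rw [dropWhile_eq_nil_iff] at h
    simpa using h x hx
  have hhead : (p.dropWhile (fun y => y ≠ x)).head hne = x := by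
    have hpos : 0 < (p.dropWhile (fun y => decide (y ≠ x))).length := by
      exact length_pos_iff.2 hne
    have h1 := dropWhile_get_zero_not (p := fun y => decide (y ≠ x)) p hpos
    rw [get_mk_zero] at h1
    simpa using h1
  conv_lhs => rw [← takeWhile_append_dropWhile (p := fun y => decide (y ≠ x)) (l := p)]
  rw [pre, post]
  congr 1
  have h2 := cons_head_tail hne
  rw [hhead] at h2
  exact h2.symm

lemma pre_of_split {x : α} {A B : List α} (hA : ∀ y ∈ A, y ≠ x) :
    pre x (A ++ x :: B) = A := by
  rw [pre, takeWhile_append_all (by intro a ha; simpa using hA a ha)]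
  simp

lemma post_of_split {x : α} {A B : List α} (hA : ∀ y ∈ A, y ≠ x) :
    post x (A ++ x :: B) = B := by
  rw [post, dropWhile_append_all (by intro a ha; simpa using hA a ha)]
  simp

/-- The crossed path: prefix of `p` up to the first occurrence of `x`,
followed by the part of `q` from the first occurrence of `x` on. -/
def cross (x : α) (p q : List α) : List α := pre x p ++ x :: post x q

lemma pre_cross {x : α} (p q : List α) : pre x (cross x p q) = pre x p :=
  pre_of_split pre_ne

lemma post_cross {x : α} (p q : List α) : post x (cross x p q) = post x q :=
  post_of_split pre_ne

lemma mem_cross {x : α} {p q : List α} (hp : x ∈ p) (hq : x ∈ q) :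
    ∀ y ∈ cross x p q, y ∈ p ∨ y ∈ q := by
  intro y hy
  rw [cross] at hy
  rcases mem_append.1 hy with h | h
  · exact Or.inl ((takeWhile_sublist _).mem h)
  · right
    rw [split_eq hq]
    exact mem_append.2 (Or.inr h)

lemma mem_cross_self {x : α} (p q : List α) : x ∈ cross x p q := by
  rw [cross]; exact mem_append.2 (Or.inr mem_cons_self)

lemma cross_cross {x : α} {p q : List α} (hp : x ∈ p) (hq : x ∈ q) :
    cross x (cross x p q) (cross x q p) = p := by
  rw [cross, pre_cross, post_cross, ← split_eq hp]

lemma head?_cross {x : α} {p q : List α} (hp : x ∈ p) :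
    (cross x p q).head? = p.head? := by
  conv_rhs => rw [split_eq hp]
  rw [cross, head?_append, head?_append]
  simp

lemma getLast?_cross {x : α} {p q : List α} (hq : x ∈ q) :
    (cross x p q).getLast? = q.getLast? := by
  conv_rhs => rw [split_eq hq]
  rw [cross, getLast?_append, getLast?_append]
  have h1 : (x :: post x q).getLast?.isSome := by
    rw [getLast?_isSome]; simp
  rw [Option.or_of_isSome h1, Option.or_of_isSome h1]

lemma chain'_cross {E : α → α → Prop} {x : α} {p q : List α}
    (hp : x ∈ p) (hq : x ∈ q) (hcp : p.Chain' E) (hcq : q.Chain' E) :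
    (cross x p q).Chain' E := by
  rw [split_eq hp, Chain', isChain_append] at hcp
  rw [split_eq hq, Chain', isChain_append] at hcq
  rw [cross, Chain', isChain_append]
  exact ⟨hcp.1, hcq.2.1, by simpa using hcp.2.2⟩

variable [CommRing R] {w : α → α → R}

@[simp] lemma pathWeight_nil : pathWeight w ([] : List α) = 1 := by simp [pathWeight]

@[simp] lemma pathWeight_singleton (a : α) : pathWeight w [a] = 1 := by simp [pathWeight]

@[simp] lemma pathWeight_cons_cons (a b : α) (l : List α) :
    pathWeight w (a :: b :: l) = w a b * pathWeight w (b :: l) := by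
  simp [pathWeight]

lemma pathWeight_append (x : α) (A B : List α) :
    pathWeight w (A ++ x :: B) = pathWeight w (A ++ [x]) * pathWeight w (x :: B) := by
  induction A with
  | nil => simp
  | cons a A' ih =>
    cases A' with
    | nil => simp [mul_assoc]
    | cons c A'' =>
      simp only [cons_append, pathWeight_cons_cons] at ih ⊢
      rw [ih]; ring

lemma pathWeight_cross_mul {x : α} {p q : List α} (hp : x ∈ p) (hq : x ∈ q) :
    pathWeight w (cross x p q) * pathWeight w (cross x q p)
      = pathWeight w p * pathWeight w q := by
  rw [cross, cross, pathWeight_append x (pre x p) (post x q),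
    pathWeight_append x (pre x q) (post x p)]
  conv_rhs => rw [split_eq hp, split_eq hq]
  rw [pathWeight_append x (pre x p) (post x p), pathWeight_append x (pre x q) (post x q)]
  ring

lemma isPathList_cross {E : α → α → Prop} {a b c d x : α} {p q : List α}
    (hp : IsPathList E a b p) (hq : IsPathList E c d q) (hxp : x ∈ p) (hxq : x ∈ q) :
    IsPathList E a d (cross x p q) :=
  ⟨chain'_cross hxp hxq hp.1 hq.1, (head?_cross hxp).trans hp.2.1,
    (getLast?_cross hxq).trans hq.2.2⟩

lemma cycle_of_chain'_not_nodup {E : α → α → Prop} {l : List α}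
    (hc : l.Chain' E) (hnd : ¬ l.Nodup) :
    ∃ (x : α) (c : List α), IsPathList E x x c ∧ 2 ≤ c.length := by
  induction l with
  | nil => exact absurd nodup_nil hnd
  | cons a t ih =>
    by_cases hat : a ∈ t
    · obtain ⟨s, t', rfl⟩ := append_of_mem hat
      refine ⟨a, a :: s ++ [a], ⟨?_, rfl, getLast?_concat⟩, by simp⟩
      have hpre : (a :: s ++ [a]) <+: (a :: (s ++ a :: t')) := by
        refine ⟨t', by simp⟩
      exact hc.prefix hpre
    · have hnt : ¬ t.Nodup := fun h => hnd (h.cons hat)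
      exact ih hc.tail hnt


lemma nodup_of_acyclic {E : V → V → Prop} (hacyc : Acyclic E) {a b : V} {p : List V}
    (h : IsPathList E a b p) : p.Nodup := by
  by_contra hnd
  obtain ⟨x, c, hc, hlen⟩ := cycle_of_chain'_not_nodup h.1 hnd
  exact absurd (hacyc x c hc) (by omega)

lemma pathSet_finite [Fintype V] {E : V → V → Prop} (hacyc : Acyclic E) (a b : V) :
    {p : List V | IsPathList E a b p}.Finite :=
  (List.finite_length_le V (Fintype.card V)).subset
    (fun _ hp => (nodup_of_acyclic hacyc hp).length_le_card)

lemma exists_inversion {n : ℕ} {σ : Equiv.Perm (Fin n)} (h : σ ≠ 1) :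
    ∃ i j : Fin n, i < j ∧ σ j < σ i := by
  have hne : (Finset.univ.filter (fun i : Fin n => σ i ≠ i)).Nonempty := by
    by_contra hc
    rw [Finset.not_nonempty_iff_eq_empty, Finset.filter_eq_empty_iff] at hc
    exact h (Equiv.ext fun i => not_not.1 (hc (Finset.mem_univ i)))
  obtain ⟨i, himem, hminl⟩ := Finset.exists_min_image _ id hne
  have hi : σ i ≠ i := (Finset.mem_filter.1 himem).2
  have hmin : ∀ k, σ k ≠ k → i ≤ k := fun k hk =>
    hminl k (Finset.mem_filter.2 ⟨Finset.mem_univ _, hk⟩)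
  have hfix : ∀ k, k < i → σ k = k := fun k hk => by
    by_contra hkk; exact absurd (hmin k hkk) (not_le.2 hk)
  have hσi : i < σ i := by
    rcases lt_trichotomy (σ i) i with hlt | heq | hgt
    · exact absurd (σ.injective (hfix (σ i) hlt)) hi
    · exact absurd heq hi
    · exact hgt
  have hji : σ.symm i ≠ i := fun hh => hi (by conv_lhs => rw [← hh, Equiv.apply_symm_apply])
  have hij : i < σ.symm i := by
    rcases lt_or_gt_of_ne hji with hlt | hgt
    · exact absurd ((Equiv.apply_symm_apply σ i).symm.trans (hfix _ hlt)) (Ne.symm hji)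
    · exact hgt
  refine ⟨i, σ.symm i, hij, ?_⟩
  rw [Equiv.apply_symm_apply]
  exact hσi

lemma not_disjoint_iff {l₁ l₂ : List α} :
    ¬ l₁.Disjoint l₂ ↔ ∃ a, a ∈ l₁ ∧ a ∈ l₂ := by
  unfold List.Disjoint
  push_neg
  simp

section Sel

variable {n : ℕ}

/-- `y` is a vertex of some path other than the `i`-th. -/
def meets (P : Fin n → List V) (i : Fin n) (y : V) : Prop := ∃ j, j ≠ i ∧ y ∈ P j

/-- indices whose path intersects another path -/
def ISet (P : Fin n → List V) : Finset (Fin n) :=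
  Finset.univ.filter (fun i => ∃ j, j ≠ i ∧ ¬ (P i).Disjoint (P j))

/-- indices `j ≠ i` whose path passes through `x` -/
def JSet (P : Fin n → List V) (i : Fin n) (x : V) : Finset (Fin n) :=
  Finset.univ.filter (fun j => j ≠ i ∧ x ∈ P j)

lemma mem_ISet {P : Fin n → List V} {i : Fin n} :
    i ∈ ISet P ↔ ∃ j, j ≠ i ∧ ¬ (P i).Disjoint (P j) := by
  simp [ISet]

lemma mem_JSet {P : Fin n → List V} {i j : Fin n} {x : V} :
    j ∈ JSet P i x ↔ j ≠ i ∧ x ∈ P j := by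
  simp [JSet]

/-- canonical selection of the swap data -/
noncomputable def sel (P : Fin n → List V) : Option (Fin n × V × Fin n) :=
  if hI : (ISet P).Nonempty then
    if hD : ((P ((ISet P).min' hI)).dropWhile
        (fun y => ¬ meets P ((ISet P).min' hI) y)) ≠ [] then
      if hJ : (JSet P ((ISet P).min' hI)
          (((P ((ISet P).min' hI)).dropWhile
            (fun y => ¬ meets P ((ISet P).min' hI) y)).head hD)).Nonempty then
        some ((ISet P).min' hI,
          ((P ((ISet P).min' hI)).dropWhile
            (fun y => ¬ meets P ((ISet P).min' hI) y)).head hD,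
          (JSet P ((ISet P).min' hI)
            (((P ((ISet P).min' hI)).dropWhile
              (fun y => ¬ meets P ((ISet P).min' hI) y)).head hD)).min' hJ)
      else none
    else none
  else none

/-- the characterizing properties of the selected data -/
def Props (P : Fin n → List V) (i : Fin n) (x : V) (j : Fin n) : Prop :=
  (i ∈ ISet P ∧ ∀ k ∈ ISet P, i ≤ k) ∧
  (∃ A B, P i = A ++ x :: B ∧ (∀ y ∈ A, ¬ meets P i y) ∧ meets P i x) ∧
  (j ∈ JSet P i x ∧ ∀ k ∈ JSet P i x, j ≤ k)

lemma sel_eq_some {P : Fin n → List V} {i : Fin n} {x : V} {j : Fin n}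
    (h : Props P i x j) : sel P = some (i, x, j) := by
  obtain ⟨⟨hiI, himin⟩, ⟨A, B, hsplit, hA, hx⟩, hjJ, hjmin⟩ := h
  have hI : (ISet P).Nonempty := ⟨i, hiI⟩
  have hmin : (ISet P).min' hI = i :=
    le_antisymm (Finset.min'_le _ _ hiI) (Finset.le_min' _ _ _ himin)
  have hD : (P i).dropWhile (fun y => ¬ meets P i y) = x :: B := by
    rw [hsplit, dropWhile_append_all (by intro a ha; simpa using hA a ha),
      dropWhile_cons_of_neg (by simpa using hx)]
  rw [sel, dif_pos hI]
  simp only [hmin, hD]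
  rw [dif_pos (cons_ne_nil x B)]
  simp only [head_cons]
  have hJ : (JSet P i x).Nonempty := ⟨j, hjJ⟩
  erw [dif_pos hJ]
  have hminJ : (JSet P i x).min' hJ = j :=
    le_antisymm (Finset.min'_le _ _ hjJ) (Finset.le_min' _ _ _ hjmin)
  rw [hminJ]

lemma exists_props {P : Fin n → List V} (hint : ¬ NonIntersecting P) :
    ∃ i x j, Props P i x j := by
  have hI : (ISet P).Nonempty := by
    rw [NonIntersecting] at hint
    push_neg at hint
    obtain ⟨i, j, hij, hd⟩ := hint
    exact ⟨i, mem_ISet.2 ⟨j, Ne.symm hij, hd⟩⟩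
  set i := (ISet P).min' hI with hidef
  have hiI : i ∈ ISet P := (ISet P).min'_mem hI
  obtain ⟨m, hmi, hdm⟩ := mem_ISet.1 hiI
  obtain ⟨y, hy1, hy2⟩ := not_disjoint_iff.1 hdm
  have hD : (P i).dropWhile (fun z => ¬ meets P i z) ≠ [] := by
    intro hnil
    rw [dropWhile_eq_nil_iff] at hnil
    have := hnil y hy1
    simp only [decide_eq_true_iff] at this
    exact this ⟨m, hmi, hy2⟩
  set x := ((P i).dropWhile (fun z => ¬ meets P i z)).head hD with hxdef
  have hmx : meets P i x := by
    have hpos : 0 < ((P i).dropWhile (fun z => decide (¬ meets P i z))).length := by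
      exact length_pos_iff.2 hD
    have h1 := dropWhile_get_zero_not (p := fun z => decide (¬ meets P i z)) (P i) hpos
    rw [get_mk_zero] at h1
    simpa [hxdef] using h1
  refine ⟨i, x, ?_⟩
  have hJ : (JSet P i x).Nonempty := by
    obtain ⟨m', hm', hxm'⟩ := hmx
    exact ⟨m', mem_JSet.2 ⟨hm', hxm'⟩⟩
  refine ⟨(JSet P i x).min' hJ, ⟨hiI, fun k hk => Finset.min'_le _ _ hk⟩, ?_,
    (JSet P i x).min'_mem hJ, fun k hk => Finset.min'_le _ _ hk⟩
  refine ⟨(P i).takeWhile (fun z => ¬ meets P i z),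
    ((P i).dropWhile (fun z => ¬ meets P i z)).tail, ?_, ?_, hmx⟩
  · conv_lhs => rw [← takeWhile_append_dropWhile
      (p := fun z => decide (¬ meets P i z)) (l := P i)]
    congr 1
    rw [hxdef]
    exact (cons_head_tail hD).symm
  · intro z hz
    have := mem_takeWhile_imp hz
    simpa using this

/-- the tuple of paths with the tails of the `i`-th and `j`-th paths swapped at `x` -/
def swapped (P : Fin n → List V) (i j : Fin n) (x : V) : Fin n → List V :=
  Function.update (Function.update P i (cross x (P i) (P j))) j (cross x (P j) (P i))

lemma swapped_apply_i {P : Fin n → List V} {i j : Fin n} {x : V} (hji : j ≠ i) :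
    swapped P i j x i = cross x (P i) (P j) := by
  rw [swapped, Function.update_of_ne (Ne.symm hji), Function.update_self]

lemma swapped_apply_j {P : Fin n → List V} {i j : Fin n} {x : V} :
    swapped P i j x j = cross x (P j) (P i) := by
  rw [swapped, Function.update_self]

lemma swapped_apply_ne {P : Fin n → List V} {i j : Fin n} {x : V} {k : Fin n}
    (hki : k ≠ i) (hkj : k ≠ j) : swapped P i j x k = P k := by
  rw [swapped, Function.update_of_ne hkj, Function.update_of_ne hki]

lemma props_swap {P : Fin n → List V} {i : Fin n} {x : V} {j : Fin n}
    (hnd : ∀ k, (P k).Nodup) (h : Props P i x j) :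
    Props (swapped P i j x) i x j ∧ swapped (swapped P i j x) i j x = P ∧
      ¬ NonIntersecting (swapped P i j x) ∧ j ≠ i ∧ i ≤ j ∧ x ∈ P i ∧ x ∈ P j := by
  obtain ⟨⟨hiI, himin⟩, ⟨A, B, hsplit, hA, hx⟩, hjJ, hjmin⟩ := h
  obtain ⟨hji, hxq⟩ := mem_JSet.1 hjJ
  have hxp : x ∈ P i := by rw [hsplit]; exact mem_append.2 (Or.inr mem_cons_self)
  have hAne : ∀ y ∈ A, y ≠ x := fun y hy hyx => hA y hy (hyx ▸ hx)
  have hpre : pre x (P i) = A := by rw [hsplit]; exact pre_of_split hAne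
  have hpost : post x (P i) = B := by rw [hsplit]; exact post_of_split hAne
  have hij : i ≤ j := himin j (mem_ISet.2 ⟨i, Ne.symm hji,
    not_disjoint_iff.2 ⟨x, hxq, hxp⟩⟩)
  set Q := swapped P i j x with hQ
  have hQi : Q i = cross x (P i) (P j) := swapped_apply_i hji
  have hQj : Q j = cross x (P j) (P i) := swapped_apply_j
  have hQk : ∀ k, k ≠ i → k ≠ j → Q k = P k := fun k h1 h2 => swapped_apply_ne h1 h2
  have hxQi : x ∈ Q i := by rw [hQi]; exact mem_cross_self _ _
  have hxQj : x ∈ Q j := by rw [hQj]; exact mem_cross_self _ _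
  refine ⟨⟨⟨?_, ?_⟩, ?_, ?_⟩, ?_, ?_, hji, hij, hxp, hxq⟩
  · exact mem_ISet.2 ⟨j, hji, not_disjoint_iff.2 ⟨x, hxQi, hxQj⟩⟩
  · -- minimality of i in ISet Q
    intro k hk
    by_contra hik
    push_neg at hik
    have hki : k ≠ i := ne_of_lt hik
    have hkj : k ≠ j := ne_of_lt (lt_of_lt_of_le hik hij)
    have hknotI : k ∉ ISet P := fun hmem => absurd (himin k hmem) (not_le.2 hik)
    rw [mem_ISet] at hknotI
    push_neg at hknotI
    obtain ⟨m, hmk, hdis⟩ := mem_ISet.1 hk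
    obtain ⟨y, hy1, hy2⟩ := not_disjoint_iff.1 hdis
    rw [hQk k hki hkj] at hy1
    by_cases hmi : m = i
    · rw [hmi, hQi] at hy2
      rcases mem_cross hxp hxq y hy2 with hyp | hyq
      · exact hknotI i (Ne.symm hki) hy1 hyp
      · exact hknotI j (Ne.symm hkj) hy1 hyq
    · by_cases hmj : m = j
      · rw [hmj, hQj] at hy2
        rcases mem_cross hxq hxp y hy2 with hyq | hyp
        · exact hknotI j (Ne.symm hkj) hy1 hyq
        · exact hknotI i (Ne.symm hki) hy1 hyp
      · rw [hQk m hmi hmj] at hy2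
        exact hknotI m hmk hy1 hy2
  · -- splitting of Q i at x
    refine ⟨A, post x (P j), ?_, ?_, ⟨j, hji, hxQj⟩⟩
    · rw [hQi, cross, hpre]
    · intro y hy
      rintro ⟨m, hmi, hym⟩
      by_cases hmj : m = j
      · rw [hmj, hQj, cross] at hym
        rcases mem_append.1 hym with hyq | hyrest
        · exact hA y hy ⟨j, hji, (takeWhile_sublist _).mem hyq⟩
        · rcases mem_cons.1 hyrest with hyx | hypost
          · exact hAne y hy hyx
          · have hnodup : (A ++ x :: B).Nodup := hsplit ▸ hnd i
            have hdisj := disjoint_of_nodup_append hnodup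
            exact hdisj hy (hpost ▸ mem_cons_of_mem x hypost)
      · rw [hQk m hmi hmj] at hym
        exact hA y hy ⟨m, hmi, hym⟩
  · -- j is minimal in JSet Q i x
    refine ⟨mem_JSet.2 ⟨hji, hxQj⟩, ?_⟩
    intro k hk
    obtain ⟨hki, hxk⟩ := mem_JSet.1 hk
    by_cases hkj : k = j
    · exact hkj.ge
    · rw [hQk k hki hkj] at hxk
      exact hjmin k (mem_JSet.2 ⟨hki, hxk⟩)
  · -- double swap is the identity
    funext k
    by_cases hki : k = i
    · subst hki
      rw [swapped_apply_i hji, hQi, hQj]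
      exact cross_cross hxp hxq
    · by_cases hkj : k = j
      · subst hkj
        rw [swapped_apply_j, hQi, hQj]
        exact cross_cross hxq hxp
      · rw [swapped_apply_ne hki hkj]
        exact hQk k hki hkj
  · -- Q is still intersecting
    intro hni
    exact hni i j (Ne.symm hji) hxQi hxQj

lemma prod_pathWeight_swapped {w : V → V → R} {P : Fin n → List V} {i j : Fin n} {x : V}
    (hji : j ≠ i) (hxp : x ∈ P i) (hxq : x ∈ P j) :
    ∏ k, pathWeight w (swapped P i j x k) = ∏ k, pathWeight w (P k) := by
  have key : ∀ Q : Fin n → List V, ∏ k, pathWeight w (Q k) =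
      pathWeight w (Q i) * (pathWeight w (Q j) *
        ∏ k ∈ (Finset.univ.erase i).erase j, pathWeight w (Q k)) := by
    intro Q
    rw [← Finset.mul_prod_erase Finset.univ _ (Finset.mem_univ i),
      ← Finset.mul_prod_erase _ _ (Finset.mem_erase.2 ⟨hji, Finset.mem_univ j⟩)]
  rw [key (swapped P i j x), key P, swapped_apply_i hji, swapped_apply_j]
  have hrest : ∀ k ∈ (Finset.univ.erase i).erase j,
      pathWeight w (swapped P i j x k) = pathWeight w (P k) := by
    intro k hk
    rcases Finset.mem_erase.1 hk with ⟨hkj, hk2⟩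
    rcases Finset.mem_erase.1 hk2 with ⟨hki, -⟩
    rw [swapped_apply_ne hki hkj]
  rw [Finset.prod_congr rfl hrest, ← mul_assoc, ← mul_assoc,
    pathWeight_cross_mul hxp hxq]

end Sel

end GVaux

/-- Lindström–Gessel–Viennot lemma, compatible case:
`F⁰(u, v) = det[h(u_i, v_j)]`. -/
theorem gessel_viennot_compatible [Fintype V] [CommRing R] {n : ℕ}
    (E : V → V → Prop) (hacyc : Acyclic E) (w : V → V → R)
    (u v : Fin n → V) (hcomp : DCompatible E u v) :
    F0 E w u v = (Matrix.of fun i j : Fin n => pathGF E w (u i) (v j)).det := by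
  classical
  open GVaux in
  have hfin : ∀ a b : V, {p : List V | IsPathList E a b p}.Finite :=
    fun a b => GVaux.pathSet_finite hacyc a b
  have hGF : ∀ a b : V, pathGF E w a b = ∑ p ∈ (hfin a b).toFinset, pathWeight w p :=
    fun a b => finsum_mem_eq_finite_toFinset_sum _ (hfin a b)
  set T : Equiv.Perm (Fin n) → Finset (Fin n → List V) :=
    fun σ => Fintype.piFinset (fun i => (hfin (u i) (v (σ i))).toFinset) with hT
  have hmemT : ∀ (σ : Equiv.Perm (Fin n)) (P : Fin n → List V),
      P ∈ T σ ↔ ∀ i, IsPathList E (u i) (v (σ i)) (P i) := by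
    intro σ P
    simp [hT, Fintype.mem_piFinset, Set.Finite.mem_toFinset]
  rw [← Matrix.det_transpose, Matrix.det_apply']
  have step1 : ∀ σ : Equiv.Perm (Fin n),
      (∏ i, (Matrix.of fun i j : Fin n => pathGF E w (u i) (v j)).transpose (σ i) i)
        = ∑ P ∈ T σ, ∏ i, pathWeight w (P i) := by
    intro σ
    simp only [Matrix.transpose_apply, Matrix.of_apply]
    simp_rw [hGF]
    rw [Finset.prod_univ_sum]
  rw [Finset.sum_congr rfl (fun σ _ => by rw [step1 σ])]
  have split : ∀ σ : Equiv.Perm (Fin n),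
      ((Equiv.Perm.sign σ : ℤ) : R) * ∑ P ∈ T σ, ∏ i, pathWeight w (P i) =
      ((Equiv.Perm.sign σ : ℤ) : R) *
          ∑ P ∈ (T σ).filter NonIntersecting, ∏ i, pathWeight w (P i) +
        ∑ P ∈ (T σ).filter (fun P => ¬ NonIntersecting P),
          ((Equiv.Perm.sign σ : ℤ) : R) * ∏ i, pathWeight w (P i) := by
    intro σ
    rw [← Finset.mul_sum,
      ← Finset.sum_filter_add_sum_filter_not (T σ) NonIntersecting, mul_add]
  rw [Finset.sum_congr rfl (fun σ _ => split σ), Finset.sum_add_distrib]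
  have partB : (∑ σ : Equiv.Perm (Fin n),
      ∑ P ∈ (T σ).filter (fun P => ¬ NonIntersecting P),
        ((Equiv.Perm.sign σ : ℤ) : R) * ∏ i, pathWeight w (P i)) = 0 := by
    rw [Finset.sum_sigma' Finset.univ
      (fun σ => (T σ).filter (fun P => ¬ NonIntersecting P))
      (fun σ P => ((Equiv.Perm.sign σ : ℤ) : R) * ∏ i, pathWeight w (P i))]
    refine Finset.sum_involution
      (fun a _ => (GVaux.sel a.2).elim a
        (fun t => ⟨a.1 * Equiv.swap t.1 t.2.2, GVaux.swapped a.2 t.1 t.2.2 t.2.1⟩))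
      ?_ ?_ ?_ ?_
    · rintro ⟨σ, P⟩ ha
      obtain ⟨-, haf⟩ := Finset.mem_sigma.1 ha
      obtain ⟨haT, hint⟩ := Finset.mem_filter.1 haf
      have hP := (hmemT σ P).1 haT
      have hnd : ∀ k, (P k).Nodup := fun k => GVaux.nodup_of_acyclic hacyc (hP k)
      obtain ⟨i, x, j, hprops⟩ := GVaux.exists_props hint
      have hsel := GVaux.sel_eq_some hprops
      obtain ⟨hprops', hdouble, hint', hji, hij, hxp, hxq⟩ :=
        GVaux.props_swap hnd hprops
      simp only [hsel, Option.elim_some]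
      rw [GVaux.prod_pathWeight_swapped hji hxp hxq]
      have hsign : Equiv.Perm.sign (σ * Equiv.swap i j) = -Equiv.Perm.sign σ := by
        rw [Equiv.Perm.sign_mul, Equiv.Perm.sign_swap (Ne.symm hji), mul_neg_one]
      rw [hsign]
      push_cast
      ring
    · rintro ⟨σ, P⟩ ha -
      obtain ⟨-, haf⟩ := Finset.mem_sigma.1 ha
      obtain ⟨haT, hint⟩ := Finset.mem_filter.1 haf
      obtain ⟨i, x, j, hprops⟩ := GVaux.exists_props hint
      have hsel := GVaux.sel_eq_some hprops
      have hji : j ≠ i := (GVaux.mem_JSet.1 hprops.2.2.1).1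
      simp only [hsel, Option.elim_some]
      intro heq
      have hfst := congrArg Sigma.fst heq
      simp only at hfst
      have h1 : Equiv.swap i j = 1 :=
        mul_left_cancel (a := σ) (by rw [mul_one]; exact hfst)
      exact (Ne.symm hji) (Equiv.swap_eq_one_iff.1 h1)
    · rintro ⟨σ, P⟩ ha
      obtain ⟨-, haf⟩ := Finset.mem_sigma.1 ha
      obtain ⟨haT, hint⟩ := Finset.mem_filter.1 haf
      have hP := (hmemT σ P).1 haT
      have hnd : ∀ k, (P k).Nodup := fun k => GVaux.nodup_of_acyclic hacyc (hP k)
      obtain ⟨i, x, j, hprops⟩ := GVaux.exists_props hint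
      have hsel := GVaux.sel_eq_some hprops
      obtain ⟨hprops', hdouble, hint', hji, hij, hxp, hxq⟩ :=
        GVaux.props_swap hnd hprops
      simp only [hsel, Option.elim_some]
      refine Finset.mem_sigma.2 ⟨Finset.mem_univ _, Finset.mem_filter.2 ⟨?_, hint'⟩⟩
      refine (hmemT _ _).2 ?_
      intro k
      dsimp only
      by_cases hki : k = i
      · subst hki
        rw [GVaux.swapped_apply_i hji]
        have : (σ * Equiv.swap k j) k = σ j := by
          rw [Equiv.Perm.mul_apply, Equiv.swap_apply_left]
        rw [this]
        exact GVaux.isPathList_cross (hP k) (hP j) hxp hxq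
      · by_cases hkj : k = j
        · subst hkj
          rw [GVaux.swapped_apply_j]
          have : (σ * Equiv.swap i k) k = σ i := by
            rw [Equiv.Perm.mul_apply, Equiv.swap_apply_right]
          rw [this]
          exact GVaux.isPathList_cross (hP k) (hP i) hxq hxp
        · rw [GVaux.swapped_apply_ne hki hkj]
          have : (σ * Equiv.swap i j) k = σ k := by
            rw [Equiv.Perm.mul_apply, Equiv.swap_apply_of_ne_of_ne hki hkj]
          rw [this]
          exact hP k
    · rintro ⟨σ, P⟩ ha
      obtain ⟨-, haf⟩ := Finset.mem_sigma.1 ha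
      obtain ⟨haT, hint⟩ := Finset.mem_filter.1 haf
      have hP := (hmemT σ P).1 haT
      have hnd : ∀ k, (P k).Nodup := fun k => GVaux.nodup_of_acyclic hacyc (hP k)
      obtain ⟨i, x, j, hprops⟩ := GVaux.exists_props hint
      have hsel := GVaux.sel_eq_some hprops
      obtain ⟨hprops', hdouble, hint', hji, hij, hxp, hxq⟩ :=
        GVaux.props_swap hnd hprops
      have hsel' := GVaux.sel_eq_some hprops'
      simp only [hsel, Option.elim_some, hsel', hdouble]
      rw [mul_assoc, Equiv.swap_mul_self, mul_one]
  rw [partB, add_zero]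
  have empty_filter : ∀ σ : Equiv.Perm (Fin n), σ ≠ 1 →
      (T σ).filter NonIntersecting = ∅ := by
    intro σ hσ
    rw [Finset.filter_eq_empty_iff]
    intro P hPT hNI
    have hP := (hmemT σ P).1 hPT
    obtain ⟨i, j, hij, hinv⟩ := GVaux.exists_inversion hσ
    exact hcomp i j (σ j) (σ i) hij hinv (P i) (P j) (hP i) (hP j)
      (hNI i j (ne_of_lt hij))
  rw [Finset.sum_eq_single 1
    (fun σ _ hσ => by rw [empty_filter σ hσ, Finset.sum_empty, mul_zero])
    (fun h => absurd (Finset.mem_univ 1) h)]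
  rw [Equiv.Perm.sign_one]
  have hS0fin : {P : Fin n → List V |
      (∀ i, IsPathList E (u i) (v i) (P i)) ∧ NonIntersecting P}.Finite := by
    refine (Set.Finite.pi (fun i => hfin (u i) (v i))).subset ?_
    intro P hPmem
    exact Set.mem_univ_pi.2 (fun i => hPmem.1 i)
  rw [F0, finsum_mem_eq_finite_toFinset_sum _ hS0fin]
  have hsets : hS0fin.toFinset = (T 1).filter NonIntersecting := by
    ext P
    simp [Set.Finite.mem_toFinset, Finset.mem_filter, hmemT, Equiv.Perm.one_apply]
  rw [hsets]
  push_cast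
  ring
end
end

section
/- Let n be even and let Π be the set of pairs (π, P) where π ∈ S_n and P = (P_1,...,P_n) is an n-tuple of paths in an acyclic digraph D with P_i a path from u_i to v_{π(i)}, weighted by sgn(π) times the product of path weights. Fix a total order on the vertices of D. The map sending a configuration with intersecting paths to the configuration obtained by choosing the least intersection vertex w, the two intersecting paths P_i, P_j through w with smallest indices, swapping their tails after w, and composing π with the transposition (i j), is a weight-negating involution on the set of configurations containing at least one pair of intersecting paths. -/
open scoped Classical

noncomputable section

variable {V R : Type*}

set_option linter.unusedSectionVars false

namespace TailSwapAux

variable {E : V → V → Prop} {w0 x : V}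

lemma cross_absurd (hacyc : Acyclic E) {s₁ t₁ s₂ t₂ : List V}
    (h1 : List.Chain' E (s₁ ++ w0 :: t₁)) (h2 : List.Chain' E (s₂ ++ w0 :: t₂))
    (hx1 : x ∈ s₁) (hx2 : x ∈ t₂) : False := by
  obtain ⟨α, β, rfl⟩ := List.append_of_mem hx1
  obtain ⟨γ, δ, rfl⟩ := List.append_of_mem hx2
  have c1 : List.Chain' E (x :: β ++ w0 :: t₁) := h1.suffix ⟨α, by simp⟩
  have c1' : List.Chain' E ((x :: β) ++ [w0]) := c1.prefix ⟨t₁, by simp⟩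
  have c2 : List.Chain' E (w0 :: (γ ++ x :: δ)) := h2.suffix ⟨s₂, by simp⟩
  have c2' : List.Chain' E ((w0 :: γ) ++ [x]) := c2.prefix ⟨δ, by simp⟩
  have hc1 := List.isChain_append.mp c1'
  have hq : List.Chain' E ((x :: β) ++ ((w0 :: γ) ++ [x])) := by
    refine List.isChain_append.mpr ?_
    refine ⟨hc1.1, c2', ?_⟩
    intro a ha b hb
    simp at hb
    subst hb
    exact hc1.2.2 a ha w0 (by simp)
  have hlen := hacyc x ((x :: β) ++ ((w0 :: γ) ++ [x]))
    ⟨hq, by simp, by rw [← List.append_assoc]; exact List.getLast?_concat⟩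
  simp at hlen

lemma pathWeight_cons_cons [CommRing R] (wt : V → V → R) (a b : V) (l : List V) :
    pathWeight wt (a :: b :: l) = wt a b * pathWeight wt (b :: l) := by
  simp [pathWeight]

lemma pathWeight_append [CommRing R] (wt : V → V → R) (s t : List V) (w : V) :
    pathWeight wt (s ++ w :: t) = pathWeight wt (s ++ [w]) * pathWeight wt (w :: t) := by
  induction s with
  | nil => simp [pathWeight]
  | cons a s ih =>
    cases s with
    | nil => simp [pathWeight_cons_cons, pathWeight, mul_assoc]
    | cons b s' =>
      have ih' := ih
      simp only [List.cons_append] at ih' ⊢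
      rw [pathWeight_cons_cons, pathWeight_cons_cons, ih', mul_assoc]

section DecEq

variable [DecidableEq V]

/-- The part of the path `p` strictly before the first occurrence of `w`. -/
def preL (w : V) (p : List V) : List V := p.takeWhile (· ≠ w)

/-- The part of the path `p` from the first occurrence of `w` on. -/
def sufL (w : V) (p : List V) : List V := p.dropWhile (· ≠ w)

lemma preL_append_sufL (w : V) (p : List V) : preL w p ++ sufL w p = p :=
  List.takeWhile_append_dropWhile

lemma pre_ne {p : List V} (h : x ∈ preL w0 p) : x ≠ w0 := by
  have := List.mem_takeWhile_imp (p := fun x => decide (x ≠ w0)) h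
  simpa using this

lemma suf_cons {p : List V} (hw : w0 ∈ p) :
    ∃ t, sufL w0 p = w0 :: t := by
  unfold sufL
  induction p with
  | nil => simp at hw
  | cons a r ih =>
    by_cases h : a = w0
    · subst h
      exact ⟨r, by rw [List.dropWhile_cons, if_neg (by simp)]⟩
    · have hw' : w0 ∈ r := by
        rcases List.mem_cons.mp hw with h' | h'
        · exact absurd h'.symm h
        · exact h'
      obtain ⟨t, ht⟩ := ih hw'
      exact ⟨t, by rw [List.dropWhile_cons, if_pos (by simp [h]), ht]⟩

lemma preL_append_cons {s t : List V} (hs : ∀ x ∈ s, x ≠ w0) :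
    preL w0 (s ++ w0 :: t) = s := by
  unfold preL
  induction s with
  | nil => rw [List.nil_append, List.takeWhile_cons, if_neg (by simp)]
  | cons a s ih =>
    have ha : a ≠ w0 := hs a List.mem_cons_self
    rw [List.cons_append, List.takeWhile_cons, if_pos (by simp [ha]),
      ih fun x hx => hs x (List.mem_cons_of_mem a hx)]

lemma sufL_append_cons {s t : List V} (hs : ∀ x ∈ s, x ≠ w0) :
    sufL w0 (s ++ w0 :: t) = w0 :: t := by
  unfold sufL
  induction s with
  | nil => rw [List.nil_append, List.dropWhile_cons, if_neg (by simp)]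
  | cons a s ih =>
    have ha : a ≠ w0 := hs a List.mem_cons_self
    rw [List.cons_append, List.dropWhile_cons, if_pos (by simp [ha]),
      ih fun x hx => hs x (List.mem_cons_of_mem a hx)]

lemma glue_isPath {E : V → V → Prop} {a d w : V} {b c : V} {p q : List V}
    (hp : IsPathList E a b p) (hq : IsPathList E c d q) (hwp : w ∈ p) (hwq : w ∈ q) :
    IsPathList E a d (preL w p ++ sufL w q) := by
  obtain ⟨tp, htp⟩ := suf_cons hwp
  obtain ⟨tq, htq⟩ := suf_cons hwq
  have hp' : p = preL w p ++ w :: tp := by rw [← htp, preL_append_sufL]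
  have hq' : q = preL w q ++ w :: tq := by rw [← htq, preL_append_sufL]
  have h1 := List.isChain_append.mp (hp' ▸ hp.1)
  have h2 := List.isChain_append.mp (hq' ▸ hq.1)
  refine ⟨?_, ?_, ?_⟩
  · rw [htq]; refine List.isChain_append.mpr ?_
    refine ⟨h1.1, h2.2.1, ?_⟩
    intro y hy z hz
    simp only [List.head?_cons, Option.mem_def, Option.some.injEq] at hz
    subst hz
    exact h1.2.2 y hy w (by simp)
  · have hh := hp.2.1
    rw [hp', List.head?_append] at hh
    rw [htq, List.head?_append]
    simpa using hh
  · have hl := hq.2.2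
    rw [hq', List.getLast?_append] at hl
    rw [htq, List.getLast?_append]
    have hz : ∃ z, (w :: tq).getLast? = some z := by
      cases h : (w :: tq).getLast? with
      | none => exact absurd (List.getLast?_eq_none_iff.mp h) (by simp)
      | some z => exact ⟨z, rfl⟩
    obtain ⟨z, hz⟩ := hz
    rw [hz] at hl ⊢
    simpa using hl

end DecEq

section Main

variable [Fintype V] [LinearOrder V] {n : ℕ}

def interVerts (P : Fin n → List V) : Finset V :=
  Finset.univ.filter fun x => ∃ i j, i ≠ j ∧ x ∈ P i ∧ x ∈ P j

lemma interVerts_nonempty {P : Fin n → List V} (h : ¬ NonIntersecting P) :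
    (interVerts P).Nonempty := by
  simp only [NonIntersecting, not_forall] at h
  obtain ⟨i, j, hij, hd⟩ := h
  have hd' : ∃ a, a ∈ P i ∧ a ∈ P j := by
    by_contra hno
    push_neg at hno
    exact hd fun a ha hb => hno a ha hb
  obtain ⟨a, ha1, ha2⟩ := hd'
  refine ⟨a, ?_⟩
  simp only [interVerts, Finset.mem_filter, Finset.mem_univ, true_and]
  exact ⟨i, j, by assumption, ha1, ha2⟩

def swapAt (P : Fin n → List V) (i j : Fin n) (w : V) : Fin n → List V :=
  Function.update (Function.update P i (preL w (P i) ++ sufL w (P j))) j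
    (preL w (P j) ++ sufL w (P i))

lemma swapAt_i (P : Fin n → List V) {i j : Fin n} (hij : i ≠ j) (w : V) :
    swapAt P i j w i = preL w (P i) ++ sufL w (P j) := by
  simp [swapAt, Function.update_of_ne hij]

lemma swapAt_j (P : Fin n → List V) (i j : Fin n) (w : V) :
    swapAt P i j w j = preL w (P j) ++ sufL w (P i) := by
  simp [swapAt]

lemma swapAt_other (P : Fin n → List V) {i j k : Fin n} (hki : k ≠ i) (hkj : k ≠ j) (w : V) :
    swapAt P i j w k = P k := by
  simp [swapAt, Function.update_of_ne hki, Function.update_of_ne hkj]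

lemma swapAt_swapAt {P : Fin n → List V} {i j : Fin n} {w : V} (hij : i ≠ j)
    (hwi : w ∈ P i) (hwj : w ∈ P j) :
    swapAt (swapAt P i j w) i j w = P := by
  obtain ⟨ti, hti⟩ := suf_cons hwi
  obtain ⟨tj, htj⟩ := suf_cons hwj
  have hpre_i : ∀ x ∈ preL w (P i), x ≠ w := fun x hx => pre_ne hx
  have hpre_j : ∀ x ∈ preL w (P j), x ≠ w := fun x hx => pre_ne hx
  funext k
  by_cases hk : k = i
  · subst hk
    rw [swapAt_i _ hij, swapAt_i _ hij, swapAt_j, htj, hti,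
      preL_append_cons hpre_i, sufL_append_cons hpre_j, ← hti,
      preL_append_sufL]
  by_cases hk' : k = j
  · subst hk'
    rw [swapAt_j, swapAt_i _ hij, swapAt_j, htj, hti,
      preL_append_cons hpre_j, sufL_append_cons hpre_i, ← htj,
      preL_append_sufL]
  · rw [swapAt_other _ hk hk', swapAt_other _ hk hk']

lemma mem_swapAt_pair {E : V → V → Prop} (hacyc : Acyclic E) {P : Fin n → List V}
    {i j : Fin n} {w : V} (hchi : (P i).Chain' E) (hchj : (P j).Chain' E)
    (hij : i ≠ j) (hwi : w ∈ P i) (hwj : w ∈ P j) {x : V}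
    (hx : ∃ k l, k ≠ l ∧ x ∈ P k ∧ x ∈ P l) :
    ∃ k l, k ≠ l ∧ x ∈ swapAt P i j w k ∧ x ∈ swapAt P i j w l := by
  obtain ⟨ti, hti⟩ := suf_cons hwi
  obtain ⟨tj, htj⟩ := suf_cons hwj
  have hPi : P i = preL w (P i) ++ w :: ti := by rw [← hti, preL_append_sufL]
  have hPj : P j = preL w (P j) ++ w :: tj := by rw [← htj, preL_append_sufL]
  have hQi : swapAt P i j w i = preL w (P i) ++ w :: tj := by rw [swapAt_i _ hij, htj]
  have hQj : swapAt P i j w j = preL w (P j) ++ w :: ti := by rw [swapAt_j, hti]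
  have coverI : ∀ y, y ∈ P i → y ∈ swapAt P i j w i ∨ y ∈ swapAt P i j w j := by
    intro y hy
    rw [hPi, List.mem_append] at hy
    rcases hy with hy | hy
    · exact Or.inl (by rw [hQi]; exact List.mem_append_left _ hy)
    · exact Or.inr (by rw [hQj]; exact List.mem_append_right _ hy)
  have coverJ : ∀ y, y ∈ P j → y ∈ swapAt P i j w i ∨ y ∈ swapAt P i j w j := by
    intro y hy
    rw [hPj, List.mem_append] at hy
    rcases hy with hy | hy
    · exact Or.inr (by rw [hQj]; exact List.mem_append_left _ hy)
    · exact Or.inl (by rw [hQi]; exact List.mem_append_right _ hy)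
  obtain ⟨k, l, hkl, hxk, hxl⟩ := hx
  by_cases hk : k = i ∨ k = j
  · by_cases hl : l = i ∨ l = j
    · have hxij : x ∈ P i ∧ x ∈ P j := by
        rcases hk with rfl | rfl <;> rcases hl with rfl | rfl
        · exact absurd rfl hkl
        · exact ⟨hxk, hxl⟩
        · exact ⟨hxl, hxk⟩
        · exact absurd rfl hkl
      obtain ⟨hxi, hxj⟩ := hxij
      rw [hPi, List.mem_append] at hxi
      rw [hPj, List.mem_append] at hxj
      rcases hxi with hxi | hxi <;> rcases hxj with hxj | hxj
      · exact ⟨i, j, hij, by rw [hQi]; exact List.mem_append_left _ hxi,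
          by rw [hQj]; exact List.mem_append_left _ hxj⟩
      · rcases List.mem_cons.mp hxj with rfl | hxj
        · exact absurd rfl (pre_ne hxi)
        · exact absurd (cross_absurd hacyc (hPi ▸ hchi) (hPj ▸ hchj) hxi hxj) id
      · rcases List.mem_cons.mp hxi with rfl | hxi
        · exact absurd rfl (pre_ne hxj)
        · exact absurd (cross_absurd hacyc (hPj ▸ hchj) (hPi ▸ hchi) hxj hxi) id
      · exact ⟨i, j, hij, by rw [hQi]; exact List.mem_append_right _ hxj,
          by rw [hQj]; exact List.mem_append_right _ hxi⟩
    · push_neg at hl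
      have hcov : x ∈ swapAt P i j w i ∨ x ∈ swapAt P i j w j := by
        rcases hk with rfl | rfl
        · exact coverI x hxk
        · exact coverJ x hxk
      rcases hcov with h | h
      · exact ⟨l, i, hl.1, by rwa [swapAt_other _ hl.1 hl.2], h⟩
      · exact ⟨l, j, hl.2, by rwa [swapAt_other _ hl.1 hl.2], h⟩
  · push_neg at hk
    by_cases hl : l = i ∨ l = j
    · have hcov : x ∈ swapAt P i j w i ∨ x ∈ swapAt P i j w j := by
        rcases hl with rfl | rfl
        · exact coverI x hxl
        · exact coverJ x hxl
      rcases hcov with h | h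
      · exact ⟨k, i, hk.1, by rwa [swapAt_other _ hk.1 hk.2], h⟩
      · exact ⟨k, j, hk.2, by rwa [swapAt_other _ hk.1 hk.2], h⟩
    · push_neg at hl
      exact ⟨k, l, hkl, by rwa [swapAt_other _ hk.1 hk.2],
        by rwa [swapAt_other _ hl.1 hl.2]⟩

variable (E : V → V → Prop) (u v : Fin n → V)

abbrev Conf : Type _ := {C : Equiv.Perm (Fin n) × (Fin n → List V) //
    (∀ i, IsPathList E (u i) (v (C.1 i)) (C.2 i)) ∧ ¬ NonIntersecting C.2}

variable {E u v}

def wC (C : Conf E u v) : V := (interVerts C.1.2).min' (interVerts_nonempty C.2.2)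

lemma wC_spec (C : Conf E u v) : ∃ i j, i ≠ j ∧ wC C ∈ C.1.2 i ∧ wC C ∈ C.1.2 j := by
  have : wC C ∈ interVerts C.1.2 := Finset.min'_mem _ (interVerts_nonempty C.2.2)
  simpa [interVerts] using this

def idxSet (C : Conf E u v) : Finset (Fin n) :=
  Finset.univ.filter fun k => wC C ∈ C.1.2 k

lemma idxSet_ne (C : Conf E u v) : (idxSet C).Nonempty := by
  obtain ⟨i, j, hij, hi, hj⟩ := wC_spec C
  exact ⟨i, by simp [idxSet, hi]⟩

def i0 (C : Conf E u v) : Fin n := (idxSet C).min' (idxSet_ne C)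

lemma erase_ne (C : Conf E u v) : ((idxSet C).erase (i0 C)).Nonempty := by
  obtain ⟨i, j, hij, hi, hj⟩ := wC_spec C
  by_cases h : i = i0 C
  · exact ⟨j, Finset.mem_erase.mpr ⟨by rw [← h]; exact hij.symm, by simp [idxSet, hj]⟩⟩
  · exact ⟨i, Finset.mem_erase.mpr ⟨h, by simp [idxSet, hi]⟩⟩

def j0 (C : Conf E u v) : Fin n := ((idxSet C).erase (i0 C)).min' (erase_ne C)

lemma i0_ne_j0 (C : Conf E u v) : i0 C ≠ j0 C :=
  fun h => (Finset.mem_erase.mp (Finset.min'_mem _ (erase_ne C))).1 h.symm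

lemma w_mem_i0 (C : Conf E u v) : wC C ∈ C.1.2 (i0 C) := by
  have : i0 C ∈ idxSet C := Finset.min'_mem _ (idxSet_ne C)
  simpa [idxSet] using this

lemma w_mem_j0 (C : Conf E u v) : wC C ∈ C.1.2 (j0 C) := by
  have := (Finset.mem_erase.mp (show j0 C ∈ _ from Finset.min'_mem _ (erase_ne C))).2
  simpa [idxSet] using this

def newP (C : Conf E u v) : Fin n → List V := swapAt C.1.2 (i0 C) (j0 C) (wC C)

lemma w_mem_newP_i0 (C : Conf E u v) : wC C ∈ newP C (i0 C) := by
  obtain ⟨t, ht⟩ := suf_cons (w_mem_j0 C)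
  rw [newP, swapAt_i _ (i0_ne_j0 C), ht]
  exact List.mem_append_right _ List.mem_cons_self

lemma w_mem_newP_j0 (C : Conf E u v) : wC C ∈ newP C (j0 C) := by
  obtain ⟨t, ht⟩ := suf_cons (w_mem_i0 C)
  rw [newP, swapAt_j, ht]
  exact List.mem_append_right _ List.mem_cons_self

lemma newP_isPath (C : Conf E u v) (k : Fin n) :
    IsPathList E (u k) (v ((C.1.1 * Equiv.swap (i0 C) (j0 C)) k)) (newP C k) := by
  by_cases hk : k = i0 C
  · subst hk
    rw [newP, swapAt_i _ (i0_ne_j0 C)]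
    have h := glue_isPath (C.2.1 (i0 C)) (C.2.1 (j0 C)) (w_mem_i0 C) (w_mem_j0 C)
    simpa [Equiv.Perm.mul_apply, Equiv.swap_apply_left] using h
  by_cases hk' : k = j0 C
  · subst hk'
    rw [newP, swapAt_j]
    have h := glue_isPath (C.2.1 (j0 C)) (C.2.1 (i0 C)) (w_mem_j0 C) (w_mem_i0 C)
    simpa [Equiv.Perm.mul_apply, Equiv.swap_apply_right] using h
  · rw [newP, swapAt_other _ hk hk']
    have h := C.2.1 k
    simpa [Equiv.Perm.mul_apply, Equiv.swap_apply_of_ne_of_ne hk hk'] using h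

lemma newP_notNon (C : Conf E u v) : ¬ NonIntersecting (newP C) := by
  intro hN
  exact hN (i0 C) (j0 C) (i0_ne_j0 C) (w_mem_newP_i0 C) (w_mem_newP_j0 C)

def phi (C : Conf E u v) : Conf E u v :=
  ⟨⟨C.1.1 * Equiv.swap (i0 C) (j0 C), newP C⟩, newP_isPath C, newP_notNon C⟩

lemma interVerts_phi {E : V → V → Prop} {u v : Fin n → V} (hacyc : Acyclic E)
    (C : Conf E u v) : interVerts ((phi C).1.2) = interVerts C.1.2 := by
  apply Finset.Subset.antisymm
  · intro x hx
    simp only [interVerts, Finset.mem_filter, Finset.mem_univ, true_and] at hx ⊢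
    have h := mem_swapAt_pair (P := newP C) hacyc
      ((newP_isPath C (i0 C)).1) ((newP_isPath C (j0 C)).1) (i0_ne_j0 C)
      (w_mem_newP_i0 C) (w_mem_newP_j0 C) hx
    rwa [newP, swapAt_swapAt (i0_ne_j0 C) (w_mem_i0 C) (w_mem_j0 C)] at h
  · intro x hx
    simp only [interVerts, Finset.mem_filter, Finset.mem_univ, true_and] at hx ⊢
    exact mem_swapAt_pair hacyc (C.2.1 (i0 C)).1 (C.2.1 (j0 C)).1 (i0_ne_j0 C)
      (w_mem_i0 C) (w_mem_j0 C) hx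

lemma min'_congr {α : Type*} [LinearOrder α] {s t : Finset α} (h : s = t)
    (hs : s.Nonempty) (ht : t.Nonempty) : s.min' hs = t.min' ht := by
  subst h; rfl

lemma wC_phi {E : V → V → Prop} {u v : Fin n → V} (hacyc : Acyclic E)
    (C : Conf E u v) : wC (phi C) = wC C :=
  min'_congr (interVerts_phi hacyc C) _ _

lemma idxSet_phi {E : V → V → Prop} {u v : Fin n → V} (hacyc : Acyclic E)
    (C : Conf E u v) : idxSet (phi C) = idxSet C := by
  ext k
  simp only [idxSet, Finset.mem_filter, Finset.mem_univ, true_and, wC_phi hacyc C]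
  by_cases hk : k = i0 C
  · subst hk
    exact iff_of_true (w_mem_newP_i0 C) (w_mem_i0 C)
  by_cases hk' : k = j0 C
  · subst hk'
    exact iff_of_true (w_mem_newP_j0 C) (w_mem_j0 C)
  · rw [show (phi C).1.2 k = C.1.2 k from swapAt_other _ hk hk' _]

lemma i0_phi {E : V → V → Prop} {u v : Fin n → V} (hacyc : Acyclic E)
    (C : Conf E u v) : i0 (phi C) = i0 C :=
  min'_congr (idxSet_phi hacyc C) _ _

lemma j0_phi {E : V → V → Prop} {u v : Fin n → V} (hacyc : Acyclic E)
    (C : Conf E u v) : j0 (phi C) = j0 C :=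
  min'_congr (by rw [idxSet_phi hacyc C, i0_phi hacyc C]) _ _

lemma phi_invol {E : V → V → Prop} {u v : Fin n → V} (hacyc : Acyclic E) :
    Function.Involutive (phi : Conf E u v → Conf E u v) := by
  intro C
  apply Subtype.ext
  have h1 : (phi (phi C)).1.1 = C.1.1 := by
    show (phi C).1.1 * Equiv.swap (i0 (phi C)) (j0 (phi C)) = C.1.1
    rw [i0_phi hacyc, j0_phi hacyc]
    show C.1.1 * Equiv.swap (i0 C) (j0 C) * Equiv.swap (i0 C) (j0 C) = C.1.1
    rw [mul_assoc, Equiv.swap_mul_self, mul_one]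
  have h2 : (phi (phi C)).1.2 = C.1.2 := by
    show newP (phi C) = C.1.2
    rw [newP, i0_phi hacyc, j0_phi hacyc, wC_phi hacyc]
    exact swapAt_swapAt (i0_ne_j0 C) (w_mem_i0 C) (w_mem_j0 C)
  exact Prod.ext h1 h2

lemma prod_phi {E : V → V → Prop} {u v : Fin n → V} [CommRing R] (wt : V → V → R)
    (C : Conf E u v) :
    ∏ k, pathWeight wt ((phi C).1.2 k) = ∏ k, pathWeight wt (C.1.2 k) := by
  have hij := i0_ne_j0 C
  obtain ⟨ti, hti⟩ := suf_cons (w_mem_i0 C)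
  obtain ⟨tj, htj⟩ := suf_cons (w_mem_j0 C)
  set P := C.1.2 with hP
  set i := i0 C with hi
  set j := j0 C with hj
  set w := wC C with hw
  set A := preL w (P i) with hA
  set B := preL w (P j) with hB
  have hPi : P i = A ++ w :: ti := by rw [hA, ← hti, preL_append_sufL]
  have hPj : P j = B ++ w :: tj := by rw [hB, ← htj, preL_append_sufL]
  have expand : ∀ Q : Fin n → List V,
      ∏ k, pathWeight wt (Q k) =
        pathWeight wt (Q i) * (pathWeight wt (Q j) *
          ∏ k ∈ (Finset.univ.erase i).erase j, pathWeight wt (Q k)) := by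
    intro Q
    rw [← Finset.mul_prod_erase Finset.univ _ (Finset.mem_univ i),
      ← Finset.mul_prod_erase _ _ (Finset.mem_erase.mpr ⟨hij.symm, Finset.mem_univ j⟩),
      Finset.erase_right_comm]
  have e1 : newP C i = A ++ w :: tj := by rw [newP, swapAt_i _ hij, htj]
  have e2 : newP C j = B ++ w :: ti := by rw [newP, swapAt_j, hti]
  have hrest : ∏ k ∈ (Finset.univ.erase i).erase j, pathWeight wt (newP C k)
      = ∏ k ∈ (Finset.univ.erase i).erase j, pathWeight wt (P k) := by
    refine Finset.prod_congr rfl fun k hk => ?_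
    have hkj : k ≠ j := (Finset.mem_erase.mp hk).1
    have hki : k ≠ i := (Finset.mem_erase.mp (Finset.mem_erase.mp hk).2).1
    rw [newP, swapAt_other _ hki hkj]
  have f1 : pathWeight wt (A ++ w :: tj)
      = pathWeight wt (A ++ [w]) * pathWeight wt (w :: tj) := pathWeight_append ..
  have f2 : pathWeight wt (B ++ w :: ti)
      = pathWeight wt (B ++ [w]) * pathWeight wt (w :: ti) := pathWeight_append ..
  have f3 : pathWeight wt (A ++ w :: ti)
      = pathWeight wt (A ++ [w]) * pathWeight wt (w :: ti) := pathWeight_append ..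
  have f4 : pathWeight wt (B ++ w :: tj)
      = pathWeight wt (B ++ [w]) * pathWeight wt (w :: tj) := pathWeight_append ..
  show ∏ k, pathWeight wt (newP C k) = ∏ k, pathWeight wt (P k)
  rw [expand (newP C), expand P, hrest, e1, e2, hPi, hPj, f1, f2, f3, f4]
  ring

end Main

end TailSwapAux

/-- The tail-swap map on configurations `(π, P)` with at least one pair of
intersecting paths (choose the least intersection vertex, the two lowest-indexed
paths through it, swap their tails and compose `π` with the transposition) is a
weight-negating involution on the set of intersecting configurations. -/
theorem tail_swap_involution [Fintype V] [LinearOrder V] [CommRing R] {n : ℕ}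
    (hn : Even n) (E : V → V → Prop) (hacyc : Acyclic E) (w : V → V → R)
    (u v : Fin n → V) :
    ∃ φ : {C : Equiv.Perm (Fin n) × (Fin n → List V) //
            (∀ i, IsPathList E (u i) (v (C.1 i)) (C.2 i)) ∧ ¬ NonIntersecting C.2} →
          {C : Equiv.Perm (Fin n) × (Fin n → List V) //
            (∀ i, IsPathList E (u i) (v (C.1 i)) (C.2 i)) ∧ ¬ NonIntersecting C.2},
      Function.Involutive φ ∧
      ∀ C, (Equiv.Perm.sign (φ C).1.1 : ℤ) • ∏ i, pathWeight w ((φ C).1.2 i)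
            = -((Equiv.Perm.sign C.1.1 : ℤ) • ∏ i, pathWeight w (C.1.2 i)) := by
  classical
  refine ⟨TailSwapAux.phi, TailSwapAux.phi_invol hacyc, fun C => ?_⟩
  have hsign : ((Equiv.Perm.sign ((TailSwapAux.phi C).1.1) : ℤˣ) : ℤ)
      = -((Equiv.Perm.sign C.1.1 : ℤˣ) : ℤ) := by
    show ((Equiv.Perm.sign (C.1.1 * Equiv.swap (TailSwapAux.i0 C) (TailSwapAux.j0 C)) : ℤˣ) : ℤ)
      = -((Equiv.Perm.sign C.1.1 : ℤˣ) : ℤ)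
    rw [Equiv.Perm.sign_mul, Equiv.Perm.sign_swap (TailSwapAux.i0_ne_j0 C)]
    simp
  rw [TailSwapAux.prod_phi w C, hsign, neg_zsmul]
end
end

section
/- Let τ be a perfect matching on the ordered list (u_1,...,u_m, V_N,...,V_1) (with m, N even) in which no edge joins two u-vertices, so exactly m of the V's are matched to u's. Let I = {V_{i_1} < ... < V_{i_m}} be the set of V's matched to u-vertices, π ∈ S_m the permutation with u_{π(k)} matched to V_{i_k}, and σ the perfect matching induced by τ on the complement Ī. Then sgn(τ) = (−1)^{s(I,Ī)} · sgn(π) · sgn(σ), where s(I,Ī) is the shuffle number of I and Ī in {V_1,...,V_N}. -/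
open scoped Classical

noncomputable section

/-- The number of crossings of a matching given by an involution `τ` on an
ordered ground set: pairs of edges `{a, τa}`, `{c, τc}` with `a < c < τa < τc`. -/
def crossings {q : ℕ} (τ : Equiv.Perm (Fin q)) : ℕ :=
  (Finset.univ.filter fun p : Fin q × Fin q =>
    p.1 < τ p.1 ∧ p.2 < τ p.2 ∧ p.1 < p.2 ∧ p.2 < τ p.1 ∧ τ p.1 < τ p.2).card

/-- The sign of a perfect matching: `(−1)^{number of crossings}`. -/
def sgnM {q : ℕ} (τ : Equiv.Perm (Fin q)) : ℤ := (-1) ^ (crossings τ)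

/-- The position of `V_{j+1}` in the reference order `u_1 < ⋯ < u_m < V_N < ⋯ < V_1`
(positions `0,…,m−1` are the `u`'s, position `m + (N − 1 − j)` is `V_{j+1}`). -/
def posV (m N : ℕ) (j : Fin N) : Fin (m + N) :=
  ⟨m + (N - 1 - (j : ℕ)), by have := j.2; omega⟩

lemma posV_val (m N : ℕ) (j : Fin N) : (posV m N j : ℕ) = m + (N - 1 - (j : ℕ)) := rfl

lemma le_posV (m N : ℕ) (j : Fin N) : m ≤ (posV m N j : ℕ) := Nat.le_add_right _ _

lemma posV_lt_posV_iff {m N : ℕ} {j j' : Fin N} :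
    posV m N j < posV m N j' ↔ j' < j := by
  have h1 := j.2; have h2 := j'.2
  rw [Fin.lt_def, Fin.lt_def, posV_val, posV_val]
  omega

lemma posV_inj {m N : ℕ} : Function.Injective (posV m N) := by
  intro j j' h
  have h1 := j.2; have h2 := j'.2
  have : (posV m N j : ℕ) = (posV m N j' : ℕ) := by rw [h]
  rw [posV_val, posV_val] at this
  exact Fin.ext (by omega)

lemma exists_eq_posV {m N : ℕ} (x : Fin (m + N)) (hx : m ≤ (x : ℕ)) :
    ∃ j : Fin N, posV m N j = x := by
  have h2 := x.2
  refine ⟨⟨N - 1 - ((x : ℕ) - m), by omega⟩, Fin.ext ?_⟩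
  rw [posV_val]
  simp only []
  omega

theorem signAux_eq_sign : ∀ {n : ℕ} (f : Equiv.Perm (Fin n)),
    Equiv.Perm.signAux f = Equiv.Perm.sign f := by
  intro n f
  match n with
  | 0 => rw [Subsingleton.elim f 1]; simp [Equiv.Perm.signAux_one]
  | 1 => rw [Subsingleton.elim f 1]; simp [Equiv.Perm.signAux_one]
  | (n+2) =>
    have hs : Function.Surjective (MonoidHom.mk' (Equiv.Perm.signAux (n := n+2))
        Equiv.Perm.signAux_mul) := by
      intro u
      rcases Int.units_eq_one_or u with h | h
      · exact ⟨1, by simp [h, Equiv.Perm.signAux_one]⟩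
      · exact ⟨Equiv.swap 0 1, by
          rw [MonoidHom.mk'_apply, Equiv.Perm.signAux_swap (by simp : (0 : Fin (n+2)) ≠ 1), h]⟩
    have := Equiv.Perm.eq_sign_of_surjective_hom hs
    exact DFunLike.congr_fun this f

theorem sign_eq_pow_inversions {n : ℕ} (f : Equiv.Perm (Fin n)) :
    (Equiv.Perm.sign f : ℤ) =
      (-1) ^ ((Finset.univ.filter fun p : Fin n × Fin n => p.1 < p.2 ∧ f p.2 < f p.1).card) := by
  have h1 : Equiv.Perm.signAux f
      = (-1) ^ (((Equiv.Perm.finPairsLT n).filter fun x => f x.1 ≤ f x.2).card) := by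
    unfold Equiv.Perm.signAux
    rw [← Finset.prod_filter_mul_prod_filter_not (Equiv.Perm.finPairsLT n)
      (fun x => f x.1 ≤ f x.2)]
    rw [Finset.prod_congr rfl (fun x hx => if_pos (Finset.mem_filter.1 hx).2),
      Finset.prod_congr rfl (fun x hx => if_neg (Finset.mem_filter.1 hx).2),
      Finset.prod_const, Finset.prod_const_one, mul_one]
  have h2 : (((Equiv.Perm.finPairsLT n).filter fun x => f x.1 ≤ f x.2).card)
      = ((Finset.univ.filter fun p : Fin n × Fin n => p.1 < p.2 ∧ f p.2 < f p.1).card) := by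
    apply Finset.card_bij (fun x _ => (x.2, x.1))
    · intro x hx
      rw [Finset.mem_filter] at hx ⊢
      obtain ⟨hm, hle⟩ := hx
      have hlt := Equiv.Perm.mem_finPairsLT.1 hm
      refine ⟨Finset.mem_univ _, hlt, lt_of_le_of_ne hle ?_⟩
      intro h
      exact absurd (f.injective h) (ne_of_lt hlt).symm
    · intro a ha b hb h
      apply Sigma.ext <;> simp_all [Prod.ext_iff]
    · intro b hb
      rw [Finset.mem_filter] at hb
      refine ⟨⟨b.2, b.1⟩, ?_, rfl⟩
      rw [Finset.mem_filter, Equiv.Perm.mem_finPairsLT]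
      exact ⟨hb.2.1, le_of_lt hb.2.2⟩
  rw [← signAux_eq_sign, h1, h2]
  push_cast
  rfl

/-- Sign decomposition of a perfect matching `τ` on `(u_1,…,u_m,V_N,…,V_1)` with no
edge joining two `u`'s: `sgn(τ) = (−1)^{s(I,Ī)} · sgn(π) · sgn(σ)`, where `I` is the
set of `V`'s matched to `u`'s, `π` the induced permutation, and `σ` the induced
matching on the complement `Ī`. -/
theorem matching_sign_decomposition {m N : ℕ} (hm : Even m) (hN : Even N)
    (τ : Equiv.Perm (Fin (m + N)))
    (hinv : ∀ x, τ (τ x) = x) (hfpf : ∀ x, τ x ≠ x)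
    (huu : ∀ i : Fin m, ¬ ((τ (Fin.castAdd N i) : ℕ) < m))
    (I : Finset (Fin N))
    (hIdef : ∀ j : Fin N, j ∈ I ↔ ((τ (posV m N j) : ℕ) < m))
    (hIcard : I.card = m)
    (π : Equiv.Perm (Fin m))
    (hπ : ∀ k : Fin m, τ (posV m N (I.orderEmbOfFin hIcard k)) = Fin.castAdd N (π k))
    (σ : Equiv.Perm (Fin N))
    (hσfix : ∀ j ∈ I, σ j = j)
    (hσ : ∀ j : Fin N, j ∉ I → τ (posV m N j) = posV m N (σ j)) :
    sgnM τ = (-1 : ℤ) ^ (((I ×ˢ Iᶜ).filter fun p => p.2 < p.1).card) *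
      (Equiv.Perm.sign π : ℤ) * sgnM σ := by
  classical
  set P : Fin (m+N) × Fin (m+N) → Prop := fun p =>
    p.1 < τ p.1 ∧ p.2 < τ p.2 ∧ p.1 < p.2 ∧ p.2 < τ p.1 ∧ τ p.1 < τ p.2 with hPdef
  -- basic derived facts about σ
  have hσnotI : ∀ j, j ∉ I → σ j ∉ I := by
    intro j hj hc
    have h2 : σ j = j := σ.injective (hσfix _ hc)
    exact hj (h2 ▸ hc)
  have hσσ : ∀ j, σ (σ j) = j := by
    intro j
    by_cases hj : j ∈ I
    · rw [hσfix j hj, hσfix j hj]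
    · apply posV_inj (m := m)
      rw [← hσ (σ j) (hσnotI j hj), ← hσ j hj, hinv]
  have hσne : ∀ j, j ∉ I → σ j ≠ j := by
    intro j hj hc
    exact hfpf (posV m N j) (by rw [hσ j hj, hc])
  -- the key identity for u-columns
  have hτu : ∀ a : Fin m, τ (Fin.castAdd N a) = posV m N (I.orderEmbOfFin hIcard (π⁻¹ a)) := by
    intro a
    have h := hπ (π⁻¹ a)
    rw [← Equiv.Perm.mul_apply, mul_inv_cancel, Equiv.Perm.one_apply] at h
    have h2 := congrArg τ h
    rw [hinv] at h2
    exact h2.symm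
  -- not-in-I facts from positions
  have hnotI_of_left : ∀ (j : Fin N), posV m N j < τ (posV m N j) → j ∉ I := by
    intro j hlt hj
    have := (hIdef j).1 hj
    have h1 := le_posV m N j
    rw [Fin.lt_def] at hlt
    omega
  -- split crossings into three parts
  set S0 : Finset (Fin (m+N) × Fin (m+N)) := Finset.univ.filter P with hS0
  have hcross : crossings τ = S0.card := rfl
  set cA := (S0.filter fun p => ((p.2 : ℕ) < m)).card with hcA
  set SBC := S0.filter fun p => ¬ ((p.2 : ℕ) < m) with hSBC
  set cB := (SBC.filter fun p => ((p.1 : ℕ) < m)).card with hcB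
  set cC := (SBC.filter fun p => ¬ ((p.1 : ℕ) < m)).card with hcC
  have hsplit : crossings τ = cA + (cB + cC) := by
    rw [hcross, ← Finset.card_filter_add_card_filter_not
      (s := S0) (p := fun p => ((p.2 : ℕ) < m)),
      ← Finset.card_filter_add_card_filter_not
      (s := SBC) (p := fun p => ((p.1 : ℕ) < m))]
  have hmemS0 : ∀ p, p ∈ S0 ↔ P p := by
    intro p; rw [hS0, Finset.mem_filter]; simp only [Finset.mem_univ, true_and]
  have hmemSBC : ∀ p, p ∈ SBC ↔ P p ∧ ¬ ((p.2 : ℕ) < m) := by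
    intro p; rw [hSBC, Finset.mem_filter, hmemS0]
  have hnotI_lt : ∀ j : Fin N, j < σ j → j ∉ I := by
    intro j hj hI
    rw [hσfix j hI] at hj
    exact lt_irrefl j hj
  -- ============ part A : u-u crossings = inversions of π⁻¹ ============
  have hcAeq : cA = (Finset.univ.filter fun p : Fin m × Fin m =>
      p.1 < p.2 ∧ π⁻¹ p.2 < π⁻¹ p.1).card := by
    rw [hcA]
    apply (Finset.card_nbij
      (fun (p : Fin m × Fin m) => ((Fin.castAdd N p.1 : Fin (m+N)), (Fin.castAdd N p.2 : Fin (m+N)))) ?_ ?_ ?_).symm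
    · intro p hp
      rw [Finset.mem_coe, Finset.mem_filter] at hp
      obtain ⟨-, h1, h2⟩ := hp
      rw [Finset.mem_coe, Finset.mem_filter, hmemS0, hPdef]
      have e1 := hτu p.1
      have e2 := hτu p.2
      have l1 := le_posV m N (I.orderEmbOfFin hIcard (π⁻¹ p.1))
      have l2 := le_posV m N (I.orderEmbOfFin hIcard (π⁻¹ p.2))
      have v1 : ((Fin.castAdd N p.1 : Fin (m+N)) : ℕ) = (p.1 : ℕ) := rfl
      have v2 : ((Fin.castAdd N p.2 : Fin (m+N)) : ℕ) = (p.2 : ℕ) := rfl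
      have hp1 := p.1.2
      have hp2 := p.2.2
      refine ⟨⟨?_, ?_, ?_, ?_, ?_⟩, ?_⟩
      · rw [Fin.lt_def, e1, v1]; omega
      · rw [Fin.lt_def, e2, v2]; omega
      · rw [Fin.lt_def, v1, v2]; exact h1
      · rw [Fin.lt_def, e1, v2]; omega
      · rw [e1, e2, posV_lt_posV_iff, OrderEmbedding.lt_iff_lt]; exact h2
      · rw [v2]; exact hp2
    · intro p hp q hq h
      rw [Prod.ext_iff] at h ⊢
      exact ⟨Fin.ext congr(($(h.1) : ℕ)), Fin.ext congr(($(h.2) : ℕ))⟩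
    · intro q hq
      rw [Finset.mem_coe, Finset.mem_filter, hmemS0, hPdef] at hq
      obtain ⟨⟨c1, c2, c3, c4, c5⟩, c6⟩ := hq
      have hq1m : (q.1 : ℕ) < m := lt_trans (Fin.lt_def.1 c3) c6
      refine ⟨(⟨(q.1 : ℕ), hq1m⟩, ⟨(q.2 : ℕ), c6⟩), ?_, ?_⟩
      · rw [Finset.mem_coe, Finset.mem_filter]
        refine ⟨Finset.mem_univ _, Fin.lt_def.2 (Fin.lt_def.1 c3), ?_⟩
        have e1 : Fin.castAdd N (⟨(q.1 : ℕ), hq1m⟩ : Fin m) = q.1 := Fin.ext rfl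
        have e2 : Fin.castAdd N (⟨(q.2 : ℕ), c6⟩ : Fin m) = q.2 := Fin.ext rfl
        rw [← e1, ← e2, hτu, hτu, posV_lt_posV_iff, OrderEmbedding.lt_iff_lt] at c5
        exact c5
      · exact Prod.ext (Fin.ext rfl) (Fin.ext rfl)
  -- ============ part C : V-V crossings = crossings of σ ============
  have hcCeq : cC = crossings σ := by
    rw [hcC]
    apply (Finset.card_nbij
      (fun (p : Fin N × Fin N) => (posV m N (σ p.2), posV m N (σ p.1))) ?_ ?_ ?_).symm
    · intro p hp
      rw [Finset.mem_coe, Finset.mem_filter] at hp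
      obtain ⟨-, d1, d2, d3, d4, d5⟩ := hp
      have t2 : τ (posV m N (σ p.2)) = posV m N p.2 := by
        rw [hσ (σ p.2) (hσnotI p.2 (hnotI_lt p.2 d2)), hσσ]
      have t1 : τ (posV m N (σ p.1)) = posV m N p.1 := by
        rw [hσ (σ p.1) (hσnotI p.1 (hnotI_lt p.1 d1)), hσσ]
      rw [Finset.mem_coe, Finset.mem_filter, hmemSBC, hPdef]
      refine ⟨⟨⟨?_, ?_, ?_, ?_, ?_⟩, ?_⟩, ?_⟩
      · show posV m N (σ p.2) < τ (posV m N (σ p.2))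
        rw [t2, posV_lt_posV_iff]; exact d2
      · show posV m N (σ p.1) < τ (posV m N (σ p.1))
        rw [t1, posV_lt_posV_iff]; exact d1
      · show posV m N (σ p.2) < posV m N (σ p.1)
        rw [posV_lt_posV_iff]; exact d5
      · show posV m N (σ p.1) < τ (posV m N (σ p.2))
        rw [t2, posV_lt_posV_iff]; exact d4
      · show τ (posV m N (σ p.2)) < τ (posV m N (σ p.1))
        rw [t2, t1, posV_lt_posV_iff]; exact d3
      · exact Nat.not_lt.2 (le_posV m N (σ p.1))
      · exact Nat.not_lt.2 (le_posV m N (σ p.2))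
    · intro p hp q hq h
      rw [Prod.ext_iff] at h ⊢
      exact ⟨σ.injective (posV_inj h.2), σ.injective (posV_inj h.1)⟩
    · intro q hq
      rw [Finset.mem_coe, Finset.mem_filter, hmemSBC, hPdef] at hq
      obtain ⟨⟨⟨c1, c2, c3, c4, c5⟩, c6⟩, c7⟩ := hq
      obtain ⟨j, hj⟩ := exists_eq_posV q.1 (Nat.not_lt.1 c7)
      obtain ⟨j', hj'⟩ := exists_eq_posV q.2 (Nat.not_lt.1 c6)
      have hjI : j ∉ I := hnotI_of_left j (by rw [hj]; exact c1)
      have hj'I : j' ∉ I := hnotI_of_left j' (by rw [hj']; exact c2)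
      have t1 : τ q.1 = posV m N (σ j) := by rw [← hj, hσ j hjI]
      have t2 : τ q.2 = posV m N (σ j') := by rw [← hj', hσ j' hj'I]
      refine ⟨(σ j', σ j), ?_, ?_⟩
      · rw [Finset.mem_coe, Finset.mem_filter]
        refine ⟨Finset.mem_univ _, ?_, ?_, ?_, ?_, ?_⟩
        · show σ j' < σ (σ j')
          rw [hσσ, ← posV_lt_posV_iff (m := m), hj', ← t2]; exact c2
        · show σ j < σ (σ j)
          rw [hσσ, ← posV_lt_posV_iff (m := m), hj, ← t1]; exact c1
        · show σ j' < σ j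
          rw [← posV_lt_posV_iff (m := m), ← t1, ← t2]; exact c5
        · show σ j < σ (σ j')
          rw [hσσ, ← posV_lt_posV_iff (m := m), hj', ← t1]; exact c4
        · show σ (σ j') < σ (σ j)
          rw [hσσ, hσσ, ← posV_lt_posV_iff (m := m), hj, hj']; exact c3
      · show (posV m N (σ (σ j)), posV m N (σ (σ j'))) = q
        rw [hσσ, hσσ, hj, hj']
  -- ============ part B : u-V crossings ============
  set sB : Finset (Fin N × Fin N) :=
    (I ×ˢ Iᶜ).filter (fun p => p.2 < p.1 ∧ p.1 < σ p.2) with hsB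
  have hcBeq : cB = sB.card := by
    rw [hcB]
    apply (Finset.card_nbij
      (fun (p : Fin N × Fin N) => (τ (posV m N p.1), posV m N (σ p.2))) ?_ ?_ ?_).symm
    · intro p hp
      rw [Finset.mem_coe, hsB, Finset.mem_filter, Finset.mem_product, Finset.mem_compl] at hp
      obtain ⟨⟨hi, hj⟩, h1, h2⟩ := hp
      have hxm : (τ (posV m N p.1) : ℕ) < m := (hIdef p.1).1 hi
      have tx : τ (τ (posV m N p.1)) = posV m N p.1 := hinv _
      have ty : τ (posV m N (σ p.2)) = posV m N p.2 := by
        rw [hσ (σ p.2) (hσnotI p.2 hj), hσσ]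
      have ly := le_posV m N (σ p.2)
      have li := le_posV m N p.1
      rw [Finset.mem_coe, Finset.mem_filter, hmemSBC, hPdef]
      refine ⟨⟨⟨?_, ?_, ?_, ?_, ?_⟩, ?_⟩, ?_⟩
      · show τ (posV m N p.1) < τ (τ (posV m N p.1))
        rw [Fin.lt_def, tx]; omega
      · show posV m N (σ p.2) < τ (posV m N (σ p.2))
        rw [ty, posV_lt_posV_iff]; exact lt_trans h1 h2
      · show τ (posV m N p.1) < posV m N (σ p.2)
        rw [Fin.lt_def]; omega
      · show posV m N (σ p.2) < τ (τ (posV m N p.1))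
        rw [tx, posV_lt_posV_iff]; exact h2
      · show τ (τ (posV m N p.1)) < τ (posV m N (σ p.2))
        rw [tx, ty, posV_lt_posV_iff]; exact h1
      · exact Nat.not_lt.2 ly
      · exact hxm
    · intro p hp q hq h
      rw [Prod.ext_iff] at h ⊢
      exact ⟨posV_inj (τ.injective h.1), σ.injective (posV_inj h.2)⟩
    · intro q hq
      rw [Finset.mem_coe, Finset.mem_filter, hmemSBC, hPdef] at hq
      obtain ⟨⟨⟨c1, c2, c3, c4, c5⟩, c6⟩, c7⟩ := hq
      have e1 : Fin.castAdd N (⟨(q.1 : ℕ), c7⟩ : Fin m) = q.1 := Fin.ext rfl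
      have hτq1 : m ≤ (τ q.1 : ℕ) := by
        have := huu ⟨(q.1 : ℕ), c7⟩
        rw [e1] at this
        omega
      obtain ⟨i, hi⟩ := exists_eq_posV (τ q.1) hτq1
      have hiI : i ∈ I := by
        rw [hIdef, hi, hinv]
        exact c7
      obtain ⟨j', hj'⟩ := exists_eq_posV q.2 (Nat.not_lt.1 c6)
      have hj'I : j' ∉ I := hnotI_of_left j' (by rw [hj']; exact c2)
      have t2 : τ q.2 = posV m N (σ j') := by rw [← hj', hσ j' hj'I]
      refine ⟨(i, σ j'), ?_, ?_⟩
      · rw [Finset.mem_coe, hsB, Finset.mem_filter, Finset.mem_product, Finset.mem_compl]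
        refine ⟨⟨hiI, hσnotI j' hj'I⟩, ?_, ?_⟩
        · show σ j' < i
          rw [← posV_lt_posV_iff (m := m), hi, ← t2]; exact c5
        · show i < σ (σ j')
          rw [hσσ, ← posV_lt_posV_iff (m := m), hj', hi]; exact c4
      · show (τ (posV m N i), posV m N (σ (σ j'))) = q
        rw [hσσ, hj', hi, hinv]
  -- ============ parity bookkeeping for part B ============
  set D : Finset (Fin N × Fin N) := (I ×ˢ Iᶜ).filter (fun p => p.2 < p.1) with hD
  set Drest : Finset (Fin N × Fin N) :=
    (I ×ˢ Iᶜ).filter (fun p => p.2 < p.1 ∧ ¬ p.1 < σ p.2) with hDrest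
  have hmemDrest : ∀ p : Fin N × Fin N,
      p ∈ Drest ↔ (p.1 ∈ I ∧ p.2 ∉ I) ∧ p.2 < p.1 ∧ ¬ p.1 < σ p.2 := by
    intro p
    rw [hDrest, Finset.mem_filter, Finset.mem_product, Finset.mem_compl]
  have hDsplit : sB.card + Drest.card = D.card := by
    have h := Finset.card_filter_add_card_filter_not
      (s := (I ×ˢ Iᶜ).filter (fun p : Fin N × Fin N => p.2 < p.1))
      (p := fun p => p.1 < σ p.2)
    rw [Finset.filter_filter, Finset.filter_filter] at h
    rw [hsB, hDrest, hD]
    exact h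
  have hDrestEven : Even Drest.card := by
    have h2 := Finset.card_filter_add_card_filter_not
      (s := Drest) (p := fun p : Fin N × Fin N => p.2 < σ p.2)
    have hcardeq : (Drest.filter fun p : Fin N × Fin N => p.2 < σ p.2).card
        = (Drest.filter fun p : Fin N × Fin N => ¬ p.2 < σ p.2).card := by
      apply Finset.card_nbij (fun p => (p.1, σ p.2))
      · intro p hp
        rw [Finset.mem_coe, Finset.mem_filter, hmemDrest] at hp
        obtain ⟨⟨⟨hi, hj⟩, h1, h3⟩, h4⟩ := hp
        have hσjI : σ p.2 ∉ I := hσnotI p.2 hj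
        have hlt : σ p.2 < p.1 :=
          lt_of_le_of_ne (not_lt.1 h3) (fun h => hσjI (h ▸ hi))
        rw [Finset.mem_coe, Finset.mem_filter, hmemDrest]
        exact ⟨⟨⟨hi, hσjI⟩, hlt, by rw [hσσ]; exact not_lt.2 (le_of_lt h1)⟩,
          by show ¬ σ p.2 < σ (σ p.2); rw [hσσ]; exact not_lt.2 (le_of_lt h4)⟩
      · intro p hp q hq h
        rw [Prod.ext_iff] at h ⊢
        exact ⟨h.1, σ.injective h.2⟩
      · intro q hq
        rw [Finset.mem_coe, Finset.mem_filter, hmemDrest] at hq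
        obtain ⟨⟨⟨hi, hj⟩, h1, h3⟩, h4⟩ := hq
        have hσlt : σ q.2 < q.2 := lt_of_le_of_ne (not_lt.1 h4) (hσne q.2 hj)
        refine ⟨(q.1, σ q.2), ?_, ?_⟩
        · rw [Finset.mem_coe, Finset.mem_filter, hmemDrest]
          refine ⟨⟨⟨hi, hσnotI q.2 hj⟩, lt_trans hσlt h1, ?_⟩, ?_⟩
          · show ¬ q.1 < σ (σ q.2)
            rw [hσσ]; exact not_lt.2 (le_of_lt h1)
          · show σ q.2 < σ (σ q.2)
            rw [hσσ]; exact hσlt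
        · show (q.1, σ (σ q.2)) = q
          rw [hσσ]
    exact ⟨(Drest.filter fun p : Fin N × Fin N => p.2 < σ p.2).card, by omega⟩
  -- ============ final assembly ============
  have h1 : sgnM τ = (-1 : ℤ)^cA * ((-1 : ℤ)^cB * (-1 : ℤ)^cC) := by
    rw [sgnM, hsplit, pow_add, pow_add]
  have hsign : (Equiv.Perm.sign π : ℤ) = (-1 : ℤ)^cA := by
    have h := sign_eq_pow_inversions (π⁻¹)
    rw [Equiv.Perm.sign_inv] at h
    rw [hcAeq]
    exact h
  have hσsgn : sgnM σ = (-1 : ℤ)^cC := by rw [sgnM, hcCeq]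
  have hB : ((-1 : ℤ))^(D.card) = (-1 : ℤ)^cB := by
    rw [← hDsplit, pow_add, hcBeq, hDrestEven.neg_one_pow, mul_one]
  rw [h1, hsign, hσsgn, hB]
  ring
end
end

section
/- Let m be even, u = (u_1,...,u_m) an m-tuple of starting vertices and v an m-tuple of ending vertices in an acyclic digraph D, with u D-compatible with v. Then for every permutation π ∈ S_m other than the identity, there is no non-intersecting m-tuple of paths (P_1,...,P_m) with P_k a path from u_{π(k)} to v_k; i.e., F^0(u^π, v) = 0 unless π = id. -/
open scoped Classical

noncomputable section

variable {V R : Type*}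

/-! A non-intersecting family joining `u_{π(k)}` to `v_k` forces `π` to be monotone: an inversion
`k < l`, `π l < π k` would give paths `u_{π l} → v_l` and `u_{π k} → v_k` that must meet by
`D`-compatibility. A monotone permutation of `Fin m` is the identity. -/

theorem Equiv.Perm.eq_one_of_monotone {α : Type*} [LinearOrder α] [WellFoundedLT α]
    {π : Equiv.Perm α} (hmono : Monotone π) : π = 1 := by
  let e : α ≃o α := (hmono.strictMono_of_injective π.injective).orderIsoOfSurjective π π.surjective
  ext a
  exact congrArg (fun f : α ≃o α => f a) (Subsingleton.elim e (OrderIso.refl α))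

theorem DCompatible.monotone_of_nonIntersecting {m n : ℕ} {E : V → V → Prop}
    {u : Fin m → V} {v : Fin n → V} (hcomp : DCompatible E u v) {σ : Fin n → Fin m}
    {P : Fin n → List V} (hP : ∀ k, IsPathList E (u (σ k)) (v k) (P k))
    (hNI : NonIntersecting P) : Monotone σ := by
  intro k l hkl
  by_contra! hinv
  have hlt : k < l := hkl.lt_of_ne fun h => hinv.ne (h ▸ rfl)
  exact hcomp (σ l) (σ k) k l hinv hlt (P l) (P k) (hP l) (hP k) (hNI l k hlt.ne')

theorem no_nonintersecting_of_ne_id_general [CommRing R] {m : ℕ}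
    (E : V → V → Prop) (w : V → V → R) (u v : Fin m → V)
    (hcomp : DCompatible E u v) (π : Equiv.Perm (Fin m)) (hπ : π ≠ 1) :
    {P : Fin m → List V |
        (∀ i, IsPathList E (u (π i)) (v i) (P i)) ∧ NonIntersecting P} = ∅ ∧
    F0 E w (fun i => u (π i)) v = 0 := by
  have hempty : {P : Fin m → List V |
      (∀ i, IsPathList E (u (π i)) (v i) (P i)) ∧ NonIntersecting P} = ∅ :=
    Set.eq_empty_of_forall_notMem fun P ⟨hP, hNI⟩ =>
      hπ (Equiv.Perm.eq_one_of_monotone (hcomp.monotone_of_nonIntersecting hP hNI))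
  refine ⟨hempty, ?_⟩
  unfold F0
  rw [hempty, finsum_mem_empty]

/-- If `u` is `D`-compatible with `v` and `π ≠ id`, there is no non-intersecting
family of paths joining `u_{π(k)}` to `v_k`; in particular `F⁰(uᵖⁱ, v) = 0`. -/
theorem no_nonintersecting_of_ne_id [CommRing R] {m : ℕ} (hm : Even m)
    (E : V → V → Prop) (w : V → V → R) (u v : Fin m → V)
    (hcomp : DCompatible E u v) (π : Equiv.Perm (Fin m)) (hπ : π ≠ 1) :
    {P : Fin m → List V |
        (∀ i, IsPathList E (u (π i)) (v i) (P i)) ∧ NonIntersecting P} = ∅ ∧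
    F0 E w (fun i => u (π i)) v = 0 :=
  no_nonintersecting_of_ne_id_general E w u v hcomp π hπ
end
end
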